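/- arXiv:1603.04140 — 6 statements merged into one kernel-verified Lean document; each statement's English description precedes it below -/
import Mathlib

section
/- (Proposition 2.) Condition C1 alone does not guarantee identifiability: there exist integers J and K, a Q-matrix Q satisfying condition C1, and two parameter pairs (Θ, p) and (Θ̄, p̄), each satisfying the model restrictions (R1) and (R2) with respect to Q, such that (Θ, p) ≠ (Θ̄, p̄) but P(R = r | Q, Θ, p) = P(R = r | Q, Θ̄, p̄) for every r ∈ {0,1}^J. -/
open Finset

/-- `u ⪰ v`: componentwise domination of binary vectors. -/
def dominates {n : ℕ} (u v : Fin n → Bool) : Prop := ∀ i, v i = true → u i = true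

instance {n : ℕ} (u v : Fin n → Bool) : Decidable (dominates u v) :=
  inferInstanceAs (Decidable (∀ i, v i = true → u i = true))

/-- The all-zeros attribute profile. -/
def allZero (K : ℕ) : Fin K → Bool := fun _ => false

/-- The all-ones attribute profile. -/
def allOne (K : ℕ) : Fin K → Bool := fun _ => true

/-- The `k`-th standard basis attribute profile `e_k`. -/
def basis {K : ℕ} (k : Fin K) : Fin K → Bool := fun i => decide (i = k)

/-- `P(R = r | Q, Θ, p) = Σ_α p_α ∏_j θ_{j,α}^{r_j} (1-θ_{j,α})^{1-r_j}`. -/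
def respProb {J K : ℕ} (θ : Fin J → (Fin K → Bool) → ℝ) (p : (Fin K → Bool) → ℝ)
    (r : Fin J → Bool) : ℝ :=
  ∑ α : Fin K → Bool, p α * ∏ j, (if r j then θ j α else 1 - θ j α)

/-- The `(r, α)` entry of the T-matrix: `t_{r,α}(Θ) = ∏_{j : r_j = 1} θ_{j,α}`. -/
def tEntry {J K : ℕ} (θ : Fin J → (Fin K → Bool) → ℝ) (r : Fin J → Bool)
    (α : Fin K → Bool) : ℝ :=
  ∏ j, (if r j then θ j α else 1)

/-- The `r`-entry of the vector `T(Q,Θ) p`. -/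
def Tp {J K : ℕ} (θ : Fin J → (Fin K → Bool) → ℝ) (p : (Fin K → Bool) → ℝ)
    (r : Fin J → Bool) : ℝ :=
  ∑ α : Fin K → Bool, tEntry θ r α * p α

/-- All item parameters lie in the open unit interval. -/
def ThetaValid {J K : ℕ} (θ : Fin J → (Fin K → Bool) → ℝ) : Prop :=
  ∀ j α, θ j α ∈ Set.Ioo (0 : ℝ) 1

/-- A valid class distribution: every `p_α ∈ (0,1)` and `Σ_α p_α = 1`. -/
def PValid {K : ℕ} (p : (Fin K → Bool) → ℝ) : Prop :=
  (∀ α, p α ∈ Set.Ioo (0 : ℝ) 1) ∧ ∑ α : Fin K → Bool, p α = 1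

/-- Model restriction (R1) with respect to the Q-matrix `Q`. -/
def R1 {J K : ℕ} (Q : Fin J → Fin K → Bool) (θ : Fin J → (Fin K → Bool) → ℝ) : Prop :=
  ∀ j : Fin J,
    (∀ α α' : Fin K → Bool, dominates α (Q j) → dominates α' (Q j) → θ j α = θ j α') ∧
    (∀ αs α' : Fin K → Bool, dominates αs (Q j) → θ j α' ≤ θ j αs) ∧
    (∀ α' : Fin K → Bool, θ j (allZero K) ≤ θ j α')

/-- Model restriction (R2) with respect to the Q-matrix `Q`. -/
def R2 {J K : ℕ} (Q : Fin J → Fin K → Bool) (θ : Fin J → (Fin K → Bool) → ℝ) : Prop :=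
  ∀ (k : Fin K) (j : Fin J), Q j = basis k →
    ∀ α : Fin K → Bool, α k = false → θ j α < θ j (allOne K)

/-- Condition (C1): the first `2K` rows of `Q` form two copies of the identity. -/
def C1 {J K : ℕ} (Q : Fin J → Fin K → Bool) : Prop :=
  ∀ (k : Fin K) (h1 : (k : ℕ) < J) (h2 : K + (k : ℕ) < J),
    Q ⟨k, h1⟩ = basis k ∧ Q ⟨K + (k : ℕ), h2⟩ = basis k

/-- Condition (C2): for every `k`, `(θ_{j,e_k})_{j > 2K} ≠ (θ_{j,0})_{j > 2K}`. -/
def C2 {J K : ℕ} (θ : Fin J → (Fin K → Bool) → ℝ) : Prop :=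
  ∀ k : Fin K, ∃ j : Fin J, 2 * K ≤ (j : ℕ) ∧ θ j (basis k) ≠ θ j (allZero K)

/-! With a single attribute and identical items, the latent class model is a two-point mixture
of Bernoulli variables, and the response pattern probabilities of `J` items are polynomials of
degree at most `J` in the success probability. Two mixtures with the same moments of order
`≤ J` are therefore indistinguishable. For `J = 2` this leaves three equations for five
parameters: success probabilities `0.4, 0.6` with weights `1/2, 1/2` and `0.45, 0.7` with
weights `0.8, 0.2` both have mean `1/2` and second moment `0.26`. -/

open Polynomial

section MomentMatching

variable {ι : Type*} [Fintype ι]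

lemma sum_mul_eval_eq_of_moments_eq {w t w' t' : ι → ℝ} {n : ℕ}
    (hmom : ∀ m ≤ n, ∑ i, w i * t i ^ m = ∑ i, w' i * t' i ^ m)
    {f : ℝ[X]} (hf : f.natDegree ≤ n) :
    ∑ i, w i * f.eval (t i) = ∑ i, w' i * f.eval (t' i) := by
  have hlt : f.natDegree < n + 1 := Nat.lt_succ_of_le hf
  have expand : ∀ (v s : ι → ℝ), ∑ i, v i * f.eval (s i) =
      ∑ m ∈ range (n + 1), f.coeff m * ∑ i, v i * s i ^ m := by
    intro v s
    simp only [eval_eq_sum_range' hlt, mul_sum]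
    rw [sum_comm]
    exact sum_congr rfl fun _ _ => sum_congr rfl fun _ _ => by ring
  rw [expand, expand]
  exact sum_congr rfl fun m hm => by rw [hmom m (Nat.lt_succ_iff.mp (mem_range.mp hm))]

end MomentMatching

section IdenticalItems

variable {J K : ℕ}

lemma respProb_identical_items (t p : (Fin K → Bool) → ℝ) (r : Fin J → Bool) :
    respProb (fun _ => t) p r =
      ∑ α, p α * (∏ j, if r j then (X : ℝ[X]) else 1 - X).eval (t α) := by
  simp only [respProb, eval_prod, apply_ite (eval _), eval_X, eval_sub, eval_one]

lemma natDegree_prod_ite_X_one_sub_X_le (r : Fin J → Bool) :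
    (∏ j, if r j then (X : ℝ[X]) else 1 - X).natDegree ≤ J := by
  refine (natDegree_prod_le _ _).trans ?_
  calc ∑ j, (if r j then (X : ℝ[X]) else 1 - X).natDegree ≤ ∑ _j : Fin J, 1 :=
        sum_le_sum fun j _ => by split_ifs <;> simp [natDegree_sub_le_iff_left]
    _ = J := by simp

theorem respProb_eq_of_moments_eq {t tb p pb : (Fin K → Bool) → ℝ}
    (hmom : ∀ m ≤ J, ∑ α, p α * t α ^ m = ∑ α, pb α * tb α ^ m) (r : Fin J → Bool) :
    respProb (fun _ => t) p r = respProb (fun _ => tb) pb r := by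
  rw [respProb_identical_items, respProb_identical_items]
  exact sum_mul_eval_eq_of_moments_eq hmom (natDegree_prod_ite_X_one_sub_X_le r)

end IdenticalItems

section TwoLevelItems

variable {J K : ℕ}

def twoLevel (k : Fin K) (lo hi : ℝ) : (Fin K → Bool) → ℝ :=
  fun α => if α k then hi else lo

lemma dominates_basis_iff {k : Fin K} {α : Fin K → Bool} :
    dominates α (basis k) ↔ α k = true :=
  ⟨fun h => h k (by simp [basis]), fun h i hi => by rwa [of_decide_eq_true hi]⟩

lemma basis_injective : Function.Injective (basis : Fin K → Fin K → Bool) := fun a b h => by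
  simpa [basis] using congrFun h a

lemma twoLevel_mem_Icc (k : Fin K) {lo hi : ℝ} (hle : lo ≤ hi) (α : Fin K → Bool) :
    twoLevel k lo hi α ∈ Set.Icc lo hi := by
  unfold twoLevel; split_ifs <;> simp [hle]

lemma thetaValid_twoLevel (k : Fin K) {lo hi : ℝ} (hlo : 0 < lo) (hle : lo ≤ hi) (hhi : hi < 1) :
    ThetaValid (fun _ : Fin J => twoLevel k lo hi) := fun _ α =>
  have h := twoLevel_mem_Icc k hle α
  ⟨hlo.trans_le h.1, h.2.trans_lt hhi⟩

lemma r1_twoLevel (k : Fin K) {lo hi : ℝ} (hle : lo ≤ hi) :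
    R1 (fun _ : Fin J => basis k) (fun _ => twoLevel k lo hi) := by
  intro _
  refine ⟨fun α α' hα hα' => ?_, fun αs α' hαs => ?_, fun α' => ?_⟩
  · simp [twoLevel, dominates_basis_iff.mp hα, dominates_basis_iff.mp hα']
  · simpa [twoLevel, dominates_basis_iff.mp hαs] using (twoLevel_mem_Icc k hle α').2
  · simpa [twoLevel, allZero] using (twoLevel_mem_Icc k hle α').1

lemma r2_twoLevel (k : Fin K) {lo hi : ℝ} (hlt : lo < hi) :
    R2 (fun _ : Fin J => basis k) (fun _ => twoLevel k lo hi) := by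
  intro k' _ hk α hα
  obtain rfl := basis_injective hk
  simpa [twoLevel, allOne, hα] using hlt

end TwoLevelItems

section SingleAttribute

variable {J : ℕ}

def twoClass (π : ℝ) : (Fin 1 → Bool) → ℝ :=
  fun α => if α 0 then π else 1 - π

lemma sum_fin_one_bool (f : (Fin 1 → Bool) → ℝ) :
    ∑ α, f α = f (fun _ => false) + f (fun _ => true) := by
  rw [← (Equiv.funUnique (Fin 1) Bool).symm.sum_comp f, Fintype.sum_bool, add_comm]
  rfl

lemma pValid_twoClass {π : ℝ} (hπ : π ∈ Set.Ioo 0 1) : PValid (twoClass π) := by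
  refine ⟨fun α => ?_, by simp [sum_fin_one_bool, twoClass]⟩
  unfold twoClass
  split_ifs
  · exact hπ
  · constructor <;> linarith [hπ.1, hπ.2]

lemma sum_twoClass_mul_twoLevel_pow (π lo hi : ℝ) (m : ℕ) :
    ∑ α, twoClass π α * twoLevel 0 lo hi α ^ m = (1 - π) * lo ^ m + π * hi ^ m := by
  simp [sum_fin_one_bool, twoClass, twoLevel]

lemma c1_of_fin_one (Q : Fin J → Fin 1 → Bool) (hQ : ∀ j, Q j = basis 0) : C1 Q := by
  intro k _ _
  obtain rfl := Subsingleton.elim k 0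
  exact ⟨hQ _, hQ _⟩

end SingleAttribute

/-- **Proposition 2.** Condition (C1) alone does not guarantee identifiability: there
exist a Q-matrix satisfying (C1) and two distinct restricted parameter pairs giving
the same response distribution. -/
theorem C1_not_sufficient_for_identifiability :
    ∃ (J K : ℕ) (Q : Fin J → Fin K → Bool)
      (θ θb : Fin J → (Fin K → Bool) → ℝ) (p pb : (Fin K → Bool) → ℝ),
      2 * K ≤ J ∧ C1 Q ∧
      ThetaValid θ ∧ ThetaValid θb ∧ PValid p ∧ PValid pb ∧
      R1 Q θ ∧ R1 Q θb ∧ R2 Q θ ∧ R2 Q θb ∧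
      ¬(θ = θb ∧ p = pb) ∧
      (∀ r : Fin J → Bool, respProb θ p r = respProb θb pb r)  := by
  have hmom : ∀ m ≤ 2, ∑ α, twoClass (1 / 2) α * twoLevel 0 0.4 0.6 α ^ m =
      ∑ α, twoClass 0.2 α * twoLevel 0 0.45 0.7 α ^ m := by
    intro m hm
    simp only [sum_twoClass_mul_twoLevel_pow]
    interval_cases m <;> norm_num
  have hθ : (fun _ : Fin 2 => twoLevel 0 0.4 0.6) ≠ fun _ => twoLevel 0 0.45 0.7 := fun h => by
    have := congrFun (congrFun h 0) (allOne 1)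
    norm_num [twoLevel, allOne] at this
  refine ⟨2, 1, fun _ => basis 0, _, _, _, _, le_rfl, c1_of_fin_one _ fun _ => rfl,
    thetaValid_twoLevel 0 (by norm_num) (by norm_num) (by norm_num),
    thetaValid_twoLevel 0 (by norm_num) (by norm_num) (by norm_num),
    pValid_twoClass (by norm_num), pValid_twoClass (by norm_num),
    r1_twoLevel 0 (by norm_num), r1_twoLevel 0 (by norm_num),
    r2_twoLevel 0 (by norm_num), r2_twoLevel 0 (by norm_num),
    fun h => hθ h.1, respProb_eq_of_moments_eq hmom⟩
end

section
/- (Proposition 3.) For every θ* ∈ ℝ^J there exists a 2^J × 2^J real matrix D(θ*), depending only on θ*, such that: (i) the (r, r') entry of D(θ*) is 0 whenever r' ⋠ r and equals 1 when r' = r (so D(θ*) is lower triangular with respect to the partial order ⪯ on {0,1}^J, has unit diagonal, and is invertible); and (ii) for every J × 2^K real matrix Θ, T(Θ − θ* 1ᵀ) = D(θ*) T(Θ), where Θ − θ* 1ᵀ is the matrix obtained from Θ by subtracting θ*_j from every entry of row j. -/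
open Finset

/-!
For a single item with parameter `θ`, the pair `(1, θ)` of values of `t` at `r_j = 0, 1` is sent
to `(1, θ - s)` by the unipotent matrix `[[1, 0], [-s, 1]]`. Since `t_{r,α}` is a product of such
values over the items, `D(θ*)` is the tensor product over the items of these `2 × 2` matrices:
it inherits triangularity and the unit diagonal factorwise, and the tensor product of the
inverse factors, i.e. `D(-θ*)`, is its inverse.
-/

def Matrix.piTensor {ι κ R : Type*} [Fintype ι] [CommMonoid R] (A : ι → Matrix κ κ R) :
    Matrix (ι → κ) (ι → κ) R :=
  fun r r' => ∏ i, A i (r i) (r' i)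

namespace Matrix

variable {ι κ R : Type*} [Fintype ι] [CommSemiring R]

section

variable [DecidableEq ι] [Fintype κ]

lemma sum_prod_mul_prod (f g : ι → κ → R) :
    ∑ x : ι → κ, (∏ i, f i (x i)) * ∏ i, g i (x i) = ∏ i, ∑ k, f i k * g i k := by
  simp only [Fintype.prod_sum, prod_mul_distrib]

lemma piTensor_mulVec_prod (A : ι → Matrix κ κ R) (v : ι → κ → R) :
    piTensor A *ᵥ (fun x : ι → κ => ∏ i, v i (x i)) = fun r => ∏ i, (A i *ᵥ v i) (r i) := by
  ext r
  exact sum_prod_mul_prod _ _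

lemma piTensor_mul (A B : ι → Matrix κ κ R) :
    piTensor A * piTensor B = piTensor (fun i => A i * B i) := by
  ext r r'
  exact sum_prod_mul_prod (fun i => A i (r i)) fun i k => B i k (r' i)

end

lemma piTensor_one [DecidableEq κ] :
    piTensor (fun _ : ι => (1 : Matrix κ κ R)) = (1 : Matrix (ι → κ) (ι → κ) R) := by
  ext r r'
  by_cases h : r = r'
  · subst h
    simp [piTensor]
  · obtain ⟨i, hi⟩ := Function.ne_iff.mp h
    rw [one_apply_ne h]
    exact prod_eq_zero (mem_univ i) (one_apply_ne hi)

end Matrix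

open Matrix

/-- The matrix `[[1, 0], [-s, 1]]`, with `false` indexing the first row and column. -/
def shiftFactor (s : ℝ) : Matrix Bool Bool ℝ :=
  fun x y => if x = y then 1 else if x then -s else 0

lemma shiftFactor_mul_shiftFactor_neg (s : ℝ) : shiftFactor s * shiftFactor (-s) = 1 := by
  ext x y
  cases x <;> cases y <;> simp [shiftFactor, mul_apply]

lemma shiftFactor_mulVec (s θ : ℝ) :
    shiftFactor s *ᵥ (fun b => if b then θ else 1) = fun b => if b then θ - s else 1 := by
  ext x
  cases x <;> simp [shiftFactor, mulVec, dotProduct, sub_eq_add_neg]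

/-- The matrix `D(θ*)`. -/
def transformMatrix {J : ℕ} (θs : Fin J → ℝ) : Matrix (Fin J → Bool) (Fin J → Bool) ℝ :=
  piTensor fun j => shiftFactor (θs j)

lemma transformMatrix_mul_transformMatrix_neg {J : ℕ} (θs : Fin J → ℝ) :
    transformMatrix θs * transformMatrix (-θs) = 1 := by
  simp only [transformMatrix, piTensor_mul, Pi.neg_apply, shiftFactor_mul_shiftFactor_neg,
    piTensor_one]

lemma transformMatrix_apply_of_not_dominates {J : ℕ} (θs : Fin J → ℝ) {r r' : Fin J → Bool}
    (h : ¬ dominates r r') : transformMatrix θs r r' = 0 := by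
  simp only [dominates, not_forall, Bool.not_eq_true] at h
  obtain ⟨j, hr', hr⟩ := h
  exact prod_eq_zero (mem_univ j) (by simp [shiftFactor, hr, hr'])

lemma transformMatrix_apply_self {J : ℕ} (θs : Fin J → ℝ) (r : Fin J → Bool) :
    transformMatrix θs r r = 1 := by
  simp [transformMatrix, piTensor, shiftFactor]

lemma tEntry_sub {J K : ℕ} (θs : Fin J → ℝ) (θ : Fin J → (Fin K → Bool) → ℝ)
    (r : Fin J → Bool) (α : Fin K → Bool) :
    tEntry (fun j β => θ j β - θs j) r α = (transformMatrix θs *ᵥ fun r' => tEntry θ r' α) r := by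
  simpa only [tEntry, transformMatrix, shiftFactor_mulVec] using
    (congrFun (piTensor_mulVec_prod (fun j => shiftFactor (θs j))
      fun j (b : Bool) => if b then θ j α else 1) r).symm

/-- **Proposition 3.** For every `θ* ∈ ℝ^J` there is an invertible matrix `D(θ*)`,
depending only on `θ*`, lower triangular with respect to `⪯` with unit diagonal, such
that `T(Θ - θ* 1ᵀ) = D(θ*) T(Θ)` for every `J × 2^K` matrix `Θ`. -/
theorem exists_transform_matrix {J : ℕ} (θs : Fin J → ℝ) :
    ∃ D : Matrix (Fin J → Bool) (Fin J → Bool) ℝ,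
      (∀ r r' : Fin J → Bool, ¬ dominates r r' → D r r' = 0) ∧
      (∀ r : Fin J → Bool, D r r = 1) ∧
      IsUnit D ∧
      (∀ (K : ℕ) (θ : Fin J → (Fin K → Bool) → ℝ) (r : Fin J → Bool)
          (α : Fin K → Bool),
        tEntry (fun j β => θ j β - θs j) r α =
          ∑ r' : Fin J → Bool, D r r' * tEntry θ r' α) :=
  ⟨transformMatrix θs, fun _ _ => transformMatrix_apply_of_not_dominates θs,
    transformMatrix_apply_self θs,
    IsUnit.of_mul_eq_one _ (transformMatrix_mul_transformMatrix_neg θs),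
    fun _ => tEntry_sub θs⟩
end

section
/- (Lemma 1.) Under the standing hypotheses, for every k ∈ {1, …, K} and every profile α* with α* ⪰ e_k (i.e., α*_k = 1), the following four inequalities hold: θ_{k,0} ≠ θ̄_{k,α*}, θ_{k,α*} ≠ θ̄_{k,0}, θ_{K+k,0} ≠ θ̄_{K+k,α*}, and θ_{K+k,α*} ≠ θ̄_{K+k,0}. -/
open Finset

/-!
The T-matrix row of the single item `j` says that the mean of `θ_{j,·}` under `p` equals the
mean of `θ̄_{j,·}` under `p̄`. For `q_j = e_k`, (R1) and (R2) squeeze the first mean strictly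
between `θ_{j,0}` and `θ_{j,α*}` (every `p_α` is positive), while the second lies weakly between
`θ̄_{j,0}` and `θ̄_{j,α*}`. Hence `θ_{j,0} < θ̄_{j,α*}` and `θ̄_{j,0} < θ_{j,α*}`.
-/

section WeightedSum

variable {ι R : Type*} [Fintype ι] [Semiring R] [PartialOrder R] {f w : ι → R} {m M : R}

theorem sum_mul_le_of_le [IsOrderedRing R] (hw : ∀ i, 0 ≤ w i) (hw1 : ∑ i, w i = 1)
    (hf : ∀ i, f i ≤ M) : ∑ i, f i * w i ≤ M :=
  calc ∑ i, f i * w i ≤ ∑ i, M * w i :=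
        sum_le_sum fun i _ => mul_le_mul_of_nonneg_right (hf i) (hw i)
    _ = M := by rw [← mul_sum, hw1, mul_one]

theorem le_sum_mul_of_le [IsOrderedRing R] (hw : ∀ i, 0 ≤ w i) (hw1 : ∑ i, w i = 1)
    (hf : ∀ i, m ≤ f i) : m ≤ ∑ i, f i * w i :=
  calc m = ∑ i, m * w i := by rw [← mul_sum, hw1, mul_one]
    _ ≤ ∑ i, f i * w i := sum_le_sum fun i _ => mul_le_mul_of_nonneg_right (hf i) (hw i)

theorem sum_mul_lt_of_lt [IsStrictOrderedRing R] (hw : ∀ i, 0 < w i) (hw1 : ∑ i, w i = 1)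
    (hf : ∀ i, f i ≤ M) {i₀ : ι} (hi₀ : f i₀ < M) : ∑ i, f i * w i < M :=
  calc ∑ i, f i * w i < ∑ i, M * w i :=
        sum_lt_sum (fun i _ => mul_le_mul_of_nonneg_right (hf i) (hw i).le)
          ⟨i₀, mem_univ _, mul_lt_mul_of_pos_right hi₀ (hw i₀)⟩
    _ = M := by rw [← mul_sum, hw1, mul_one]

theorem lt_sum_mul_of_lt [IsStrictOrderedRing R] (hw : ∀ i, 0 < w i) (hw1 : ∑ i, w i = 1)
    (hf : ∀ i, m ≤ f i) {i₀ : ι} (hi₀ : m < f i₀) : m < ∑ i, f i * w i :=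
  calc m = ∑ i, m * w i := by rw [← mul_sum, hw1, mul_one]
    _ < ∑ i, f i * w i :=
        sum_lt_sum (fun i _ => mul_le_mul_of_nonneg_right (hf i) (hw i).le)
          ⟨i₀, mem_univ _, mul_lt_mul_of_pos_right hi₀ (hw i₀)⟩

end WeightedSum

section ItemMean

variable {J K : ℕ} {Q : Fin J → Fin K → Bool} {θ θb : Fin J → (Fin K → Bool) → ℝ}
  {p pb : (Fin K → Bool) → ℝ} {j : Fin J} {k : Fin K} {αs : Fin K → Bool}

theorem Tp_single (θ : Fin J → (Fin K → Bool) → ℝ) (p : (Fin K → Bool) → ℝ) (j : Fin J) :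
    Tp θ p (fun i => decide (i = j)) = ∑ α, θ j α * p α := by
  simp only [Tp, tEntry, decide_eq_true_eq, prod_ite_eq', mem_univ, if_true]

theorem R1.le_of_dominates (hR1 : R1 Q θ) (hαs : dominates αs (Q j)) (α : Fin K → Bool) :
    θ j α ≤ θ j αs :=
  (hR1 j).2.1 αs α hαs

theorem R1.zero_le (hR1 : R1 Q θ) (j : Fin J) (α : Fin K → Bool) : θ j (allZero K) ≤ θ j α :=
  (hR1 j).2.2 α

theorem zero_lt_of_dominates_basis (hR1 : R1 Q θ) (hR2 : R2 Q θ) (hQ : Q j = basis k)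
    (hαs : dominates αs (basis k)) : θ j (allZero K) < θ j αs := by
  have hone : dominates (allOne K) (Q j) := fun _ _ => rfl
  rw [(hR1 j).1 αs (allOne K) (hQ ▸ hαs) hone]
  exact hR2 k j hQ (allZero K) rfl

theorem mean_lt_of_dominates_basis (hp : PValid p) (hR1 : R1 Q θ) (hR2 : R2 Q θ)
    (hQ : Q j = basis k) (hαs : dominates αs (basis k)) : ∑ α, θ j α * p α < θ j αs :=
  sum_mul_lt_of_lt (fun α => (hp.1 α).1) hp.2 (hR1.le_of_dominates (hQ ▸ hαs))
    (zero_lt_of_dominates_basis hR1 hR2 hQ hαs)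

theorem zero_lt_mean_of_eq_basis (hp : PValid p) (hR1 : R1 Q θ) (hR2 : R2 Q θ)
    (hQ : Q j = basis k) : θ j (allZero K) < ∑ α, θ j α * p α :=
  lt_sum_mul_of_lt (fun α => (hp.1 α).1) hp.2 (hR1.zero_le j)
    (zero_lt_of_dominates_basis hR1 hR2 hQ (αs := allOne K) fun _ _ => rfl)

theorem zero_lt_bar_of_Tp_eq (hp : PValid p) (hpb : PValid pb) (hR1 : R1 Q θ)
    (hR1b : R1 Q θb) (hR2 : R2 Q θ) (hT : ∀ r, Tp θ p r = Tp θb pb r) (hQ : Q j = basis k)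
    (hαs : dominates αs (basis k)) : θ j (allZero K) < θb j αs :=
  calc θ j (allZero K) < ∑ α, θ j α * p α := zero_lt_mean_of_eq_basis hp hR1 hR2 hQ
    _ = ∑ α, θb j α * pb α := by rw [← Tp_single, ← Tp_single, hT]
    _ ≤ θb j αs :=
        sum_mul_le_of_le (fun α => (hpb.1 α).1.le) hpb.2 (hR1b.le_of_dominates (hQ ▸ hαs))

theorem bar_zero_lt_of_Tp_eq (hp : PValid p) (hpb : PValid pb) (hR1 : R1 Q θ)
    (hR1b : R1 Q θb) (hR2 : R2 Q θ) (hT : ∀ r, Tp θ p r = Tp θb pb r) (hQ : Q j = basis k)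
    (hαs : dominates αs (basis k)) : θb j (allZero K) < θ j αs :=
  calc θb j (allZero K) ≤ ∑ α, θb j α * pb α :=
        le_sum_mul_of_le (fun α => (hpb.1 α).1.le) hpb.2 (hR1b.zero_le j)
    _ = ∑ α, θ j α * p α := by rw [← Tp_single, ← Tp_single, hT]
    _ < θ j αs := mean_lt_of_dominates_basis hp hR1 hR2 hQ hαs

end ItemMean

theorem lemma1_inequalities_general
    {J K : ℕ} (Q : Fin J → Fin K → Bool)
    (θ θb : Fin J → (Fin K → Bool) → ℝ) (p pb : (Fin K → Bool) → ℝ)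
    (hp : PValid p) (hpb : PValid pb)
    (hR1 : R1 Q θ) (hR1b : R1 Q θb) (hR2 : R2 Q θ)
    (hC1 : C1 Q)
    (hT : ∀ r : Fin J → Bool, Tp θ p r = Tp θb pb r) :
    ∀ (k : Fin K) (h1 : (k : ℕ) < J) (h2 : K + (k : ℕ) < J)
      (αs : Fin K → Bool), dominates αs (basis k) →
      θ ⟨(k : ℕ), h1⟩ (allZero K) ≠ θb ⟨(k : ℕ), h1⟩ αs ∧
      θ ⟨(k : ℕ), h1⟩ αs ≠ θb ⟨(k : ℕ), h1⟩ (allZero K) ∧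
      θ ⟨K + (k : ℕ), h2⟩ (allZero K) ≠ θb ⟨K + (k : ℕ), h2⟩ αs ∧
      θ ⟨K + (k : ℕ), h2⟩ αs ≠ θb ⟨K + (k : ℕ), h2⟩ (allZero K) := by
  intro k h1 h2 αs hαs
  obtain ⟨hQ₁, hQ₂⟩ := hC1 k h1 h2
  exact ⟨(zero_lt_bar_of_Tp_eq hp hpb hR1 hR1b hR2 hT hQ₁ hαs).ne,
    (bar_zero_lt_of_Tp_eq hp hpb hR1 hR1b hR2 hT hQ₁ hαs).ne',
    (zero_lt_bar_of_Tp_eq hp hpb hR1 hR1b hR2 hT hQ₂ hαs).ne,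
    (bar_zero_lt_of_Tp_eq hp hpb hR1 hR1b hR2 hT hQ₂ hαs).ne'⟩

/-- **Lemma 1.** Under the standing hypotheses, for every `k` and every `α* ⪰ e_k`,
the four stated inequalities hold for items `k` and `K + k`. -/
theorem lemma1_inequalities
    {J K : ℕ} (hJ : 2 * K ≤ J) (Q : Fin J → Fin K → Bool)
    (θ θb : Fin J → (Fin K → Bool) → ℝ) (p pb : (Fin K → Bool) → ℝ)
    (hθ : ThetaValid θ) (hθb : ThetaValid θb) (hp : PValid p) (hpb : PValid pb)
    (hR1 : R1 Q θ) (hR1b : R1 Q θb) (hR2 : R2 Q θ) (hR2b : R2 Q θb)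
    (hC1 : C1 Q) (hC2 : C2 θ)
    (hT : ∀ r : Fin J → Bool, Tp θ p r = Tp θb pb r) :
    ∀ (k : Fin K) (h1 : (k : ℕ) < J) (h2 : K + (k : ℕ) < J)
      (αs : Fin K → Bool), dominates αs (basis k) →
      θ ⟨(k : ℕ), h1⟩ (allZero K) ≠ θb ⟨(k : ℕ), h1⟩ αs ∧
      θ ⟨(k : ℕ), h1⟩ αs ≠ θb ⟨(k : ℕ), h1⟩ (allZero K) ∧
      θ ⟨K + (k : ℕ), h2⟩ (allZero K) ≠ θb ⟨K + (k : ℕ), h2⟩ αs ∧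
      θ ⟨K + (k : ℕ), h2⟩ αs ≠ θb ⟨K + (k : ℕ), h2⟩ (allZero K) :=
  lemma1_inequalities_general Q θ θb p pb hp hpb hR1 hR1b hR2 hC1 hT
end

section
/- (Lemma 2.) Under the standing hypotheses, for all k, h ∈ {1, …, K} with k ≠ h, the following four inequalities hold: θ_{k,e_h} ≠ θ̄_{k,1}, θ_{k,1} ≠ θ̄_{k,e_h}, θ_{K+k,e_h} ≠ θ̄_{K+k,1}, and θ_{K+k,1} ≠ θ̄_{K+k,e_h}. -/
open Finset

/-!
Subtracting constants from item parameters is a row operation on the T-matrix, so for any items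
`S` and thresholds `c`, `∑_α p_α ∏_{i ∈ S} (θ_{i,α} - c_i) = ∑_α p̄_α ∏_{i ∈ S} (θ̄_{i,α} - c_i)`,
and an item of attribute `j` thresholded at its maximum removes every profile containing `j`.

Fix an attribute `m`. For every other attribute `j`, threshold one of its two items at the
`θ`-maximum and the other at the `θ̄`-maximum, and one item of `m` at the `θ̄`-maximum: the
`θ̄`-side keeps only the profile `0`, the `θ`-side only `0` and `e_m`. Moments in the second item
of `m` and a C2 item then kill the `θ`-weight of `e_m`. Its factor for `m` is
`θ_{m,1} - θ̄_{m,1}`, and the other factors can be made nonzero unless some `j` *blocks* `m`: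
`θ_{j,e_m} = θ̄_{j,1}` on both items of `j`.

A blocking attribute `j` has `θ̄_{j,1} < θ_{j,1}` on both of its items, which is impossible: with
the items of `j` thresholded at `θ̄_{·,1}` and `θ_{·,1}` and a C2 item at `θ_{·,0}`, the `θ`-side
of every moment vanishes, the `θ̄`-weights live on profiles made of attributes blocking `j`, and
probing these attributes one at a time gives a triangular system forcing the `θ̄`-side to vanish,
while the C2 item alone sees the `θ`-weight of `e_j`.

Hence `θ_{k,1} = θ̄_{k,1}` on both identity blocks, and Lemma 2 follows from (R2).
-/

variable {J K : ℕ}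

lemma basis_apply_self (m : Fin K) : basis m m = true := by simp [basis]

lemma basis_apply_of_ne {j m : Fin K} (h : j ≠ m) : basis m j = false := by simp [basis, h]

lemma allZero_ne_basis (m : Fin K) : allZero K ≠ basis m := fun h => by
  simpa [allZero, basis_apply_self] using congrFun h m

lemma exists_apply_eq_true {α : Fin K → Bool} (h0 : α ≠ allZero K) : ∃ j, α j = true := by
  by_contra! h
  exact h0 (funext fun j => by simpa [allZero] using h j)

lemma exists_ne_apply_eq_true {α : Fin K → Bool} {m : Fin K} (h0 : α ≠ allZero K)
    (h1 : α ≠ basis m) : ∃ j ≠ m, α j = true := by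
  by_contra! h
  cases hm : α m
  · exact h0 (funext fun j => by by_cases hj : j = m <;> simp_all [allZero])
  · exact h1 (funext fun j => by by_cases hj : j = m <;> simp_all [basis])

section Restrictions

variable {Q : Fin J → Fin K → Bool} {θ : Fin J → (Fin K → Bool) → ℝ} {i : Fin J} {m : Fin K}
  {α : Fin K → Bool}

lemma R1.apply_eq_allOne (h : R1 Q θ) (hQ : Q i = basis m) (hα : α m = true) :
    θ i α = θ i (allOne K) :=
  (h i).1 α (allOne K) (fun j hj => by rw [hQ] at hj; simp_all [basis]) fun _ _ => rfl

lemma R1.apply_le_allOne (h : R1 Q θ) (i : Fin J) (α : Fin K → Bool) :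
    θ i α ≤ θ i (allOne K) :=
  (h i).2.1 (allOne K) α fun _ _ => rfl

lemma R2.apply_lt_allOne (h : R2 Q θ) (hQ : Q i = basis m) (hα : α m = false) :
    θ i α < θ i (allOne K) :=
  h m i hQ α hα

end Restrictions

lemma eq_zero_of_sum_mul_eq_zero {ι R : Type*} [Fintype ι] [PartialOrder ι] [WellFoundedLT ι]
    [Semiring R] [NoZeroDivisors R] {f : ι → R} {g : ι → ι → R}
    (hsum : ∀ a, ∑ b, f b * g a b = 0) (hdiag : ∀ a, g a a ≠ 0)
    (hlow : ∀ a b, ¬b ≤ a → f b * g a b = 0) (a : ι) : f a = 0 := by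
  induction a using WellFoundedLT.induction with
  | _ a ih =>
    have h := hsum a
    rw [Fintype.sum_eq_single a fun b hb => ?_] at h
    · exact (mul_eq_zero.1 h).resolve_right (hdiag a)
    · by_cases hba : b ≤ a
      · rw [ih b (lt_of_le_of_ne hba hb), zero_mul]
      · exact hlow a b hba

namespace LatentClass

structure IsRestricted (Q : Fin J → Fin K → Bool) (θ : Fin J → (Fin K → Bool) → ℝ)
    (p : (Fin K → Bool) → ℝ) : Prop where
  pValid : PValid p
  r1 : R1 Q θ
  r2 : R2 Q θ

lemma IsRestricted.p_pos {Q : Fin J → Fin K → Bool} {θ : Fin J → (Fin K → Bool) → ℝ}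
    {p : (Fin K → Bool) → ℝ} (h : IsRestricted Q θ p) (α : Fin K → Bool) : 0 < p α :=
  (h.pValid.1 α).1

lemma Tp_indicator (θ : Fin J → (Fin K → Bool) → ℝ) (p : (Fin K → Bool) → ℝ)
    (t : Finset (Fin J)) :
    Tp θ p (fun j => decide (j ∈ t)) = ∑ α, (∏ i ∈ t, θ i α) * p α := by
  simp only [Tp, tEntry, decide_eq_true_eq, Fintype.prod_ite_mem]

section Moments

variable {θ θ' : Fin J → (Fin K → Bool) → ℝ} {p p' : (Fin K → Bool) → ℝ}

theorem sum_prod_sub_mul_eq (hT : ∀ r, Tp θ p r = Tp θ' p' r) (S : Finset (Fin J))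
    (c : Fin J → ℝ) :
    ∑ α, (∏ i ∈ S, (θ i α - c i)) * p α = ∑ α, (∏ i ∈ S, (θ' i α - c i)) * p' α := by
  have expand : ∀ (θ : Fin J → (Fin K → Bool) → ℝ) (p : (Fin K → Bool) → ℝ),
      ∑ α, (∏ i ∈ S, (θ i α - c i)) * p α
        = ∑ t ∈ S.powerset, Tp θ p (fun j => decide (j ∈ t)) * ∏ i ∈ S \ t, -c i := by
    intro θ p
    simp_rw [Tp_indicator, sub_eq_add_neg, prod_add, sum_mul]
    rw [sum_comm]
    exact sum_congr rfl fun t _ => sum_congr rfl fun α _ => by ring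
  rw [expand, expand]
  simp_rw [hT]

end Moments

def weight (θ : Fin J → (Fin K → Bool) → ℝ) (p : (Fin K → Bool) → ℝ) (W : Finset (Fin J))
    (c : Fin J → ℝ) (α : Fin K → Bool) : ℝ :=
  p α * ∏ i ∈ W, (θ i α - c i)

section Weight

variable {θ θ' : Fin J → (Fin K → Bool) → ℝ} {p p' : (Fin K → Bool) → ℝ}
  {W : Finset (Fin J)} {c : Fin J → ℝ} {i : Fin J} {α : Fin K → Bool}

lemma weight_insert (hi : i ∉ W) :
    weight θ p (insert i W) c α = (θ i α - c i) * weight θ p W c α := by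
  rw [weight, weight, prod_insert hi]
  ring

lemma weight_eq_zero_of_mem (hi : i ∈ W) (hc : θ i α = c i) : weight θ p W c α = 0 := by
  rw [weight, prod_eq_zero hi (sub_eq_zero.2 hc), mul_zero]

lemma weight_ne_zero (hp : 0 < p α) (hW : ∀ i ∈ W, θ i α ≠ c i) : weight θ p W c α ≠ 0 :=
  mul_ne_zero hp.ne' (prod_ne_zero_iff.2 fun i hi => sub_ne_zero.2 (hW i hi))

lemma sum_weight_mul_prod_eq (hT : ∀ r, Tp θ p r = Tp θ' p' r) {E : Finset (Fin J)}
    (hWE : Disjoint W E) (c : Fin J → ℝ) :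
    ∑ α, weight θ p W c α * ∏ i ∈ E, (θ i α - c i)
      = ∑ α, weight θ' p' W c α * ∏ i ∈ E, (θ' i α - c i) := by
  calc _ = ∑ α, (∏ i ∈ W ∪ E, (θ i α - c i)) * p α :=
        sum_congr rfl fun α _ => by rw [prod_union hWE, weight]; ring
    _ = ∑ α, (∏ i ∈ W ∪ E, (θ' i α - c i)) * p' α := sum_prod_sub_mul_eq hT _ c
    _ = _ := sum_congr rfl fun α _ => by rw [prod_union hWE, weight]; ring

lemma weight_mul_weight_mul_sub_mul_sub_eq_zero (hT : ∀ r, Tp θ p r = Tp θ' p' r)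
    {a b : Fin K → Bool} (hab : a ≠ b) {x y : Fin J} (hxy : x ≠ y) (hx : x ∉ W) (hy : y ∉ W)
    (hsupp : ∀ α, α ≠ a → α ≠ b → weight θ p W c α = 0)
    (hsupp' : ∀ α, α ≠ a → weight θ' p' W c α = 0) :
    weight θ p W c a * weight θ p W c b * (θ x a - θ x b) * (θ y a - θ y b) = 0 := by
  have moment : ∀ E, Disjoint W E →
      weight θ p W c a * ∏ i ∈ E, (θ i a - c i) + weight θ p W c b * ∏ i ∈ E, (θ i b - c i)
        = weight θ' p' W c a * ∏ i ∈ E, (θ' i a - c i) := fun E hE => by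
    calc _ = ∑ α, weight θ p W c α * ∏ i ∈ E, (θ i α - c i) :=
          (Fintype.sum_eq_add a b hab fun α hα => by rw [hsupp α hα.1 hα.2, zero_mul]).symm
      _ = ∑ α, weight θ' p' W c α * ∏ i ∈ E, (θ' i α - c i) := sum_weight_mul_prod_eq hT hE c
      _ = _ := Fintype.sum_eq_single a fun α hα => by rw [hsupp' α hα, zero_mul]
  have e0 := moment ∅ (disjoint_empty_right _)
  have ex := moment {x} (disjoint_singleton_right.2 hx)
  have ey := moment {y} (disjoint_singleton_right.2 hy)
  have exy := moment {x, y} (disjoint_insert_right.2 ⟨hx, disjoint_singleton_right.2 hy⟩)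
  simp only [prod_empty, prod_singleton, prod_pair hxy, mul_one] at e0 ex ey exy
  -- `(A + G) (A x₁ x₂ + G y₁ y₂) - (A x₁ + G y₁) (A x₂ + G y₂) = A G (x₁ - y₁) (x₂ - y₂)`,
  -- with `A, G` the weights at `a, b` and `x₁, y₁` (`x₂, y₂`) the shifted values of `x` (`y`) there
  linear_combination (weight θ p W c a + weight θ p W c b) * exy
    + (θ' x a - c x) * (θ' y a - c y) * weight θ' p' W c a * e0
    - (weight θ p W c a * (θ y a - c y) + weight θ p W c b * (θ y b - c y)) * ex
    - weight θ' p' W c a * (θ' x a - c x) * ey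

end Weight

section Restricted

variable {Q : Fin J → Fin K → Bool} {θ θ' : Fin J → (Fin K → Bool) → ℝ}
  {p p' : (Fin K → Bool) → ℝ} {i : Fin J} {m : Fin K}

theorem allZero_lt_allOne (h : IsRestricted Q θ p) (h' : IsRestricted Q θ' p')
    (hT : ∀ r, Tp θ p r = Tp θ' p' r) (hQ : Q i = basis m) :
    θ i (allZero K) < θ' i (allOne K) := by
  have hmean := sum_prod_sub_mul_eq hT {i} 0
  simp only [prod_singleton, Pi.zero_apply, sub_zero] at hmean
  calc θ i (allZero K) = ∑ α, θ i (allZero K) * p α := by rw [← mul_sum, h.pValid.2, mul_one]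
    _ < ∑ α, θ i α * p α :=
        sum_lt_sum (fun α _ => mul_le_mul_of_nonneg_right ((h.r1 i).2.2 α) (h.p_pos α).le)
          ⟨allOne K, mem_univ _, mul_lt_mul_of_pos_right (h.r2.apply_lt_allOne hQ rfl)
            (h.p_pos _)⟩
    _ = ∑ α, θ' i α * p' α := hmean
    _ ≤ ∑ α, θ' i (allOne K) * p' α :=
        sum_le_sum fun α _ => mul_le_mul_of_nonneg_right (h'.r1.apply_le_allOne i α)
          (h'.p_pos α).le
    _ = θ' i (allOne K) := by rw [← mul_sum, h'.pValid.2, mul_one]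

lemma IsRestricted.allZero_sub_basis_ne_zero (h : IsRestricted Q θ p) (hQ : Q i = basis m) :
    θ i (allZero K) - θ i (basis m) ≠ 0 := by
  rw [h.r1.apply_eq_allOne (α := basis m) hQ (basis_apply_self m)]
  exact sub_ne_zero.2 (h.r2.apply_lt_allOne hQ rfl).ne

lemma weight_allZero_ne_zero (h : IsRestricted Q θ p) (h' : IsRestricted Q θ' p')
    (hT : ∀ r, Tp θ p r = Tp θ' p' r) {W : Finset (Fin J)} {c : Fin J → ℝ}
    (hQ : ∀ i ∈ W, ∃ j, Q i = basis j)
    (hc : ∀ i ∈ W, c i = θ i (allOne K) ∨ c i = θ' i (allOne K)) :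
    weight θ p W c (allZero K) ≠ 0 :=
  weight_ne_zero (h.p_pos _) fun i hi => by
    obtain ⟨j, hQ⟩ := hQ i hi
    rcases hc i hi with hc | hc <;> rw [hc]
    · exact (h.r2.apply_lt_allOne hQ rfl).ne
    · exact (allZero_lt_allOne h h' hT hQ).ne

end Restricted

structure IsDoubleIdentity (Q : Fin J → Fin K → Bool) (e : Bool × Fin K → Fin J) : Prop where
  injective : Function.Injective e
  q_eq : ∀ x, Q (e x) = basis x.2

lemma mem_image_pair_iff {e : Bool × Fin K → Fin J} (he : Function.Injective e)
    {g : Fin K → Bool} {s : Finset (Fin K)} {b : Bool} {j : Fin K} :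
    e (b, j) ∈ s.image (fun k => e (g k, k)) ↔ j ∈ s ∧ b = g j := by
  simp only [mem_image, he.eq_iff, Prod.ext_iff]
  constructor
  · rintro ⟨k, hk, rfl, rfl⟩; exact ⟨hk, rfl⟩
  · rintro ⟨hj, rfl⟩; exact ⟨j, hj, rfl, rfl⟩

section Items

variable (θ θ' : Fin J → (Fin K → Bool) → ℝ) (e : Bool × Fin K → Fin J)

def Blocks (j m : Fin K) : Prop := ∀ b, θ (e (b, j)) (basis m) = θ' (e (b, j)) (allOne K)

noncomputable def freeCopy (m j : Fin K) : Bool :=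
  decide (θ (e (false, j)) (basis m) = θ' (e (false, j)) (allOne K))

noncomputable def maxItems (m : Fin K) : Finset (Fin J) :=
  (univ.erase m).image fun j => e (!freeCopy θ θ' e m j, j)

noncomputable def freeItems (m : Fin K) (s : Finset (Fin K)) : Finset (Fin J) :=
  s.image fun j => e (freeCopy θ θ' e m j, j)

def threshold (T : Finset (Fin J)) (i : Fin J) : ℝ :=
  if i ∈ T then θ i (allOne K) else θ' i (allOne K)

variable {θ θ' e}

lemma threshold_eq_or (T : Finset (Fin J)) (i : Fin J) :
    threshold θ θ' T i = θ i (allOne K) ∨ threshold θ θ' T i = θ' i (allOne K) := by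
  unfold threshold; split_ifs <;> simp

lemma IsDoubleIdentity.exists_q_eq {Q : Fin J → Fin K → Bool} (hQe : IsDoubleIdentity Q e)
    {W : Finset (Fin J)} (hW : W ⊆ univ.image e) : ∀ i ∈ W, ∃ j, Q i = basis j := fun i hi => by
  obtain ⟨x, -, rfl⟩ := mem_image.1 (hW hi)
  exact ⟨x.2, hQe.q_eq x⟩

lemma maxItems_subset (m : Fin K) : maxItems θ θ' e m ⊆ univ.image e :=
  image_subset_iff.2 fun _ _ => mem_image_of_mem _ (mem_univ _)

lemma freeItems_subset (m : Fin K) (s : Finset (Fin K)) : freeItems θ θ' e m s ⊆ univ.image e :=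
  image_subset_iff.2 fun _ _ => mem_image_of_mem _ (mem_univ _)

lemma freeCopy_spec {j m : Fin K} (h : ¬Blocks θ θ' e j m) :
    θ (e (freeCopy θ θ' e m j, j)) (basis m) ≠ θ' (e (freeCopy θ θ' e m j, j)) (allOne K) := by
  by_cases hf : θ (e (false, j)) (basis m) = θ' (e (false, j)) (allOne K)
  · simp only [freeCopy, hf, decide_true]
    exact fun ht => h fun b => by cases b <;> assumption
  · simp [freeCopy, hf]

lemma disjoint_maxItems_freeItems (he : Function.Injective e) (m : Fin K) (s : Finset (Fin K)) :
    Disjoint (maxItems θ θ' e m) (freeItems θ θ' e m s) := by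
  simp only [maxItems, freeItems, disjoint_left, mem_image]
  rintro _ ⟨j, -, rfl⟩ ⟨k, -, hk⟩
  obtain ⟨h1, rfl⟩ := Prod.ext_iff.1 (he hk)
  simp at h1

lemma disjoint_freeItems (he : Function.Injective e) {m : Fin K} {s t : Finset (Fin K)}
    (hst : Disjoint s t) : Disjoint (freeItems θ θ' e m s) (freeItems θ θ' e m t) :=
  disjoint_image (fun _ _ hjk => (Prod.ext_iff.1 (he hjk)).2) |>.2 hst

end Items

section Vanishing

variable {Q : Fin J → Fin K → Bool} {θ θ' : Fin J → (Fin K → Bool) → ℝ}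
  {p p' : (Fin K → Bool) → ℝ} {e : Bool × Fin K → Fin J} {m j : Fin K} {W : Finset (Fin J)}
  {c : Fin J → ℝ} {α : Fin K → Bool}

lemma weight_eq_zero_of_maxItems (hR1 : R1 Q θ) (hQe : IsDoubleIdentity Q e)
    (hW : maxItems θ θ' e m ⊆ W) (hc : ∀ i ∈ maxItems θ θ' e m, c i = θ i (allOne K))
    (hjm : j ≠ m) (hα : α j = true) : weight θ p W c α = 0 := by
  have hi : e (!freeCopy θ θ' e m j, j) ∈ maxItems θ θ' e m :=
    mem_image_of_mem _ (mem_erase.2 ⟨hjm, mem_univ _⟩)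
  exact weight_eq_zero_of_mem (hW hi) ((hR1.apply_eq_allOne (hQe.q_eq _) hα).trans (hc _ hi).symm)

lemma weight_eq_zero_of_freeItems (hR1 : R1 Q θ') (hQe : IsDoubleIdentity Q e)
    {s : Finset (Fin K)} (hW : freeItems θ θ' e m s ⊆ W)
    (hc : ∀ i ∈ freeItems θ θ' e m s, c i = θ' i (allOne K)) (hj : j ∈ s) (hα : α j = true) :
    weight θ' p' W c α = 0 := by
  have hi : e (freeCopy θ θ' e m j, j) ∈ freeItems θ θ' e m s := mem_image_of_mem _ hj
  exact weight_eq_zero_of_mem (hW hi) ((hR1.apply_eq_allOne (hQe.q_eq _) hα).trans (hc _ hi).symm)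

lemma weight_basis_ne_zero (h : IsRestricted Q θ p) (hQe : IsDoubleIdentity Q e)
    {s : Finset (Fin K)} (hs : ∀ j ∈ s, j ≠ m ∧ ¬Blocks θ θ' e j m)
    (hc : ∀ i ∈ maxItems θ θ' e m, c i = θ i (allOne K))
    (hc' : ∀ i ∈ freeItems θ θ' e m s, c i = θ' i (allOne K)) :
    weight θ p (maxItems θ θ' e m ∪ freeItems θ θ' e m s) c (basis m) ≠ 0 :=
  weight_ne_zero (h.p_pos _) fun i hi => by
    rcases mem_union.1 hi with hi | hi <;> obtain ⟨j, hj, rfl⟩ := mem_image.1 hi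
    · rw [hc _ hi]
      exact (h.r2.apply_lt_allOne (hQe.q_eq _) (basis_apply_of_ne (ne_of_mem_erase hj))).ne
    · rw [hc' _ hi]
      exact freeCopy_spec (hs j hj).2

end Vanishing

section NoBlockers

variable {Q : Fin J → Fin K → Bool} {θ θ' : Fin J → (Fin K → Bool) → ℝ}
  {p p' : (Fin K → Bool) → ℝ} {e : Bool × Fin K → Fin J}

theorem allOne_eq_of_forall_not_blocks (h : IsRestricted Q θ p) (h' : IsRestricted Q θ' p')
    (hT : ∀ r, Tp θ p r = Tp θ' p' r) (hQe : IsDoubleIdentity Q e) {m : Fin K}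
    (hnb : ∀ j ≠ m, ¬Blocks θ θ' e j m) {y : Fin J} (hy : ∀ x, e x ≠ y)
    (hyC2 : θ y (basis m) ≠ θ y (allZero K)) (b : Bool) :
    θ (e (b, m)) (allOne K) = θ' (e (b, m)) (allOne K) := by
  set T := maxItems θ θ' e m
  set F := freeItems θ θ' e m (univ.erase m)
  set c := threshold θ θ' T
  have he := hQe.injective
  have hbT : e (b, m) ∉ T ∪ F := by
    simp [T, F, maxItems, freeItems, mem_image_pair_iff he]
  have hcb : c (e (b, m)) = θ' (e (b, m)) (allOne K) := if_neg fun hm => hbT (mem_union_left _ hm)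
  have hcT : ∀ i ∈ T, c i = θ i (allOne K) := fun i hi => if_pos hi
  have hcF : ∀ i ∈ F, c i = θ' i (allOne K) := fun i hi =>
    if_neg (disjoint_right.1 (disjoint_maxItems_freeItems he m _) hi)
  have hsupp : ∀ α, α ≠ allZero K → α ≠ basis m →
      weight θ p (insert (e (b, m)) (T ∪ F)) c α = 0 := fun α h0 h1 => by
    obtain ⟨j, hjm, hα⟩ := exists_ne_apply_eq_true h0 h1
    exact weight_eq_zero_of_maxItems h.r1 hQe (subset_union_left.trans (subset_insert _ _))
      hcT hjm hα
  have hsupp' : ∀ α, α ≠ allZero K → weight θ' p' (insert (e (b, m)) (T ∪ F)) c α = 0 :=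
    fun α h0 => by
    obtain ⟨j, hα⟩ := exists_apply_eq_true h0
    by_cases hjm : j = m
    · subst hjm
      exact weight_eq_zero_of_mem (mem_insert_self _ _)
        ((h'.r1.apply_eq_allOne (hQe.q_eq _) hα).trans hcb.symm)
    · exact weight_eq_zero_of_freeItems h'.r1 hQe (subset_union_right.trans (subset_insert _ _))
        hcF (mem_erase.2 ⟨hjm, mem_univ _⟩) hα
  have hx : e (!b, m) ∉ insert (e (b, m)) (T ∪ F) := by
    simp [T, F, maxItems, freeItems, mem_image_pair_iff he, he.eq_iff]
  have hyW : y ∉ insert (e (b, m)) (T ∪ F) := by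
    simp [T, F, maxItems, freeItems, hy, (hy (b, m)).symm]
  have hcov := weight_mul_weight_mul_sub_mul_sub_eq_zero hT (allZero_ne_basis m) (hy (!b, m))
    hx hyW hsupp hsupp'
  have h0 : weight θ p (insert (e (b, m)) (T ∪ F)) c (allZero K) ≠ 0 :=
    weight_allZero_ne_zero h h' hT (hQe.exists_q_eq (insert_subset_iff.2
      ⟨mem_image_of_mem _ (mem_univ _), union_subset (maxItems_subset m) (freeItems_subset m _)⟩))
      fun i _ => threshold_eq_or T i
  have hrest : weight θ p (T ∪ F) c (basis m) ≠ 0 :=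
    weight_basis_ne_zero h hQe (fun j hj => ⟨ne_of_mem_erase hj, hnb j (ne_of_mem_erase hj)⟩)
      hcT hcF
  have hx0 := h.allZero_sub_basis_ne_zero (hQe.q_eq (!b, m))
  have hy0 : θ y (allZero K) - θ y (basis m) ≠ 0 := sub_ne_zero.2 hyC2.symm
  rw [weight_insert (α := basis m) hbT] at hcov
  have hb : θ (e (b, m)) (basis m) - c (e (b, m)) = 0 := by
    simpa [h0, hrest, hx0, hy0] using hcov
  rwa [← h.r1.apply_eq_allOne (hQe.q_eq _) (basis_apply_self m), ← sub_eq_zero, ← hcb]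

end NoBlockers

section DroppedMaxima

variable (θ θ' : Fin J → (Fin K → Bool) → ℝ) (e : Bool × Fin K → Fin J) (m : Fin K) (y : Fin J)

open scoped Classical in
noncomputable def blockers : Finset (Fin K) := (univ.erase m).filter (Blocks θ θ' e · m)

noncomputable def dropItems : Finset (Fin J) :=
  insert (e (true, m)) (maxItems θ θ' e m ∪ freeItems θ θ' e m (univ.erase m \ blockers θ θ' e m))

noncomputable def dropThreshold : Fin J → ℝ :=
  Function.update (threshold θ θ' (insert (e (false, m)) (maxItems θ θ' e m))) y (θ y (allZero K))

open scoped Classical in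
noncomputable def probeItems (α : Fin K → Bool) : Finset (Fin J) :=
  insert y (insert (e (false, m)) (freeItems θ θ' e m ((blockers θ θ' e m).filter (α · = false))))

variable {θ θ' e m y}

lemma blockers_subset : blockers θ θ' e m ⊆ univ.erase m := by
  classical exact filter_subset _ _

lemma dropThreshold_self : dropThreshold θ θ' e m y y = θ y (allZero K) :=
  Function.update_self ..

lemma dropThreshold_of_mem_maxItems (hy : ∀ x, e x ≠ y) {i : Fin J}
    (hi : i ∈ maxItems θ θ' e m) : dropThreshold θ θ' e m y i = θ i (allOne K) := by
  obtain ⟨j, -, rfl⟩ := mem_image.1 hi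
  rw [dropThreshold, Function.update_of_ne (hy _)]
  exact if_pos (mem_insert_of_mem hi)

lemma dropThreshold_of_mem_freeItems (he : Function.Injective e) (hy : ∀ x, e x ≠ y)
    {s : Finset (Fin K)} (hs : s ⊆ univ.erase m) {i : Fin J} (hi : i ∈ freeItems θ θ' e m s) :
    dropThreshold θ θ' e m y i = θ' i (allOne K) := by
  have hT := disjoint_right.1 (disjoint_maxItems_freeItems he m s) hi
  obtain ⟨j, hj, rfl⟩ := mem_image.1 hi
  rw [dropThreshold, Function.update_of_ne (hy _)]
  refine if_neg (mem_insert.not.2 (not_or.2 ⟨?_, hT⟩))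
  simp [he.eq_iff, ne_of_mem_erase (hs hj)]

lemma dropThreshold_true (he : Function.Injective e) (hy : ∀ x, e x ≠ y) :
    dropThreshold θ θ' e m y (e (true, m)) = θ' (e (true, m)) (allOne K) := by
  rw [dropThreshold, Function.update_of_ne (hy _)]
  refine if_neg ?_
  simp [maxItems, mem_image_pair_iff he, he.eq_iff]

lemma dropThreshold_false (hy : ∀ x, e x ≠ y) :
    dropThreshold θ θ' e m y (e (false, m)) = θ (e (false, m)) (allOne K) := by
  rw [dropThreshold, Function.update_of_ne (hy _)]
  exact if_pos (mem_insert_self _ _)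

lemma notMem_dropItems (hy : ∀ x, e x ≠ y) : y ∉ dropItems θ θ' e m := by
  simp [dropItems, maxItems, freeItems, hy, (hy _).symm]

lemma disjoint_dropItems_probeItems (he : Function.Injective e) (hy : ∀ x, e x ≠ y)
    (α : Fin K → Bool) : Disjoint (dropItems θ θ' e m) (probeItems θ θ' e m y α) := by
  have hfree := disjoint_freeItems (θ := θ) (θ' := θ') (m := m) he
    (s := univ.erase m \ blockers θ θ' e m)
    (disjoint_sdiff_self_left.mono_right (filter_subset (α · = false) (blockers θ θ' e m)))
  simp only [dropItems, probeItems, disjoint_insert_left, disjoint_insert_right,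
    disjoint_union_left]
  refine ⟨?_, ?_, ?_, disjoint_maxItems_freeItems he m _, hfree⟩
  · simpa [dropItems] using notMem_dropItems (θ := θ) (θ' := θ') (m := m) hy
  all_goals simp [blockers, maxItems, freeItems, mem_image_pair_iff he, he.eq_iff]

section Contradiction

variable {Q : Fin J → Fin K → Bool} {p p' : (Fin K → Bool) → ℝ}

lemma weight_dropItems_eq_zero_of_ne (hR1 : R1 Q θ) (hQe : IsDoubleIdentity Q e)
    (hy : ∀ x, e x ≠ y)
    {α : Fin K → Bool} (h0 : α ≠ allZero K) (h1 : α ≠ basis m) :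
    weight θ p (dropItems θ θ' e m) (dropThreshold θ θ' e m y) α = 0 := by
  obtain ⟨j, hjm, hα⟩ := exists_ne_apply_eq_true h0 h1
  exact weight_eq_zero_of_maxItems hR1 hQe (subset_union_left.trans (subset_insert _ _))
    (fun i hi => dropThreshold_of_mem_maxItems hy hi) hjm hα

lemma weight_dropItems_eq_zero_of_notMem (hR1 : R1 Q θ') (hQe : IsDoubleIdentity Q e)
    (hy : ∀ x, e x ≠ y)
    {α : Fin K → Bool} {j : Fin K} (hα : α j = true) (hj : j ∉ blockers θ θ' e m) :
    weight θ' p' (dropItems θ θ' e m) (dropThreshold θ θ' e m y) α = 0 := by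
  by_cases hjm : j = m
  · subst hjm
    exact weight_eq_zero_of_mem (mem_insert_self _ _)
      ((hR1.apply_eq_allOne (hQe.q_eq _) hα).trans (dropThreshold_true hQe.injective hy).symm)
  · exact weight_eq_zero_of_freeItems hR1 hQe (subset_union_right.trans (subset_insert _ _))
      (fun i hi => dropThreshold_of_mem_freeItems hQe.injective hy sdiff_subset hi)
      (mem_sdiff.2 ⟨mem_erase.2 ⟨hjm, mem_univ _⟩, hj⟩) hα

lemma sum_weight_dropItems_mul_prod_probeItems (hR1 : R1 Q θ) (hQe : IsDoubleIdentity Q e)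
    (hy : ∀ x, e x ≠ y) (α : Fin K → Bool) :
    ∑ β, weight θ p (dropItems θ θ' e m) (dropThreshold θ θ' e m y) β *
      ∏ i ∈ probeItems θ θ' e m y α, (θ i β - dropThreshold θ θ' e m y i) = 0 :=
  sum_eq_zero fun β _ => by
    by_cases h0 : β = allZero K
    · rw [h0]
      exact mul_eq_zero_of_right _ (prod_eq_zero (mem_insert_self y _)
        (by rw [dropThreshold_self, sub_self]))
    by_cases h1 : β = basis m
    · rw [h1]
      refine mul_eq_zero_of_right _ (prod_eq_zero (mem_insert_of_mem (mem_insert_self _ _)) ?_)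
      rw [dropThreshold_false hy, hR1.apply_eq_allOne (hQe.q_eq _) (basis_apply_self m), sub_self]
    rw [weight_dropItems_eq_zero_of_ne hR1 hQe hy h0 h1, zero_mul]

/-- The probes `probeItems α` make the system for these weights triangular in `α`. -/
lemma weight_dropItems_mul_sub_eq_zero (hR1 : R1 Q θ) (hR1' : R1 Q θ') (hR2' : R2 Q θ')
    (hT : ∀ r, Tp θ p r = Tp θ' p' r) (hQe : IsDoubleIdentity Q e) (hy : ∀ x, e x ≠ y)
    (hlt : θ' (e (false, m)) (allOne K) < θ (e (false, m)) (allOne K)) (α : Fin K → Bool) :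
    weight θ' p' (dropItems θ θ' e m) (dropThreshold θ θ' e m y) α *
      (θ' y α - θ y (allZero K)) = 0 := by
  have he := hQe.injective
  set B := blockers θ θ' e m
  have hcy : dropThreshold θ θ' e m y y = θ y (allZero K) := dropThreshold_self
  have hc0 : dropThreshold θ θ' e m y (e (false, m)) = θ (e (false, m)) (allOne K) :=
    dropThreshold_false hy
  have hcF : ∀ {α : Fin K → Bool} {i}, i ∈ freeItems θ θ' e m (B.filter (α · = false)) →
      dropThreshold θ θ' e m y i = θ' i (allOne K) := fun hi =>
    dropThreshold_of_mem_freeItems he hy ((filter_subset _ _).trans blockers_subset) hi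
  refine eq_zero_of_sum_mul_eq_zero (f := fun α =>
      weight θ' p' (dropItems θ θ' e m) (dropThreshold θ θ' e m y) α * (θ' y α - θ y (allZero K)))
    (g := fun α β => (θ' (e (false, m)) β - dropThreshold θ θ' e m y (e (false, m))) *
      ∏ i ∈ freeItems θ θ' e m (B.filter (α · = false)), (θ' i β - dropThreshold θ θ' e m y i))
    (fun α => ?_) (fun α => ?_) (fun α β hβα => ?_) α
  · have hyE : y ∉ insert (e (false, m)) (freeItems θ θ' e m (B.filter (α · = false))) := by
      simp [freeItems, hy, (hy _).symm]
    have h0E : e (false, m) ∉ freeItems θ θ' e m (B.filter (α · = false)) := by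
      simp [B, blockers, freeItems, mem_image_pair_iff he]
    rw [← sum_weight_dropItems_mul_prod_probeItems (p := p) hR1 hQe hy α,
      sum_weight_mul_prod_eq hT (disjoint_dropItems_probeItems he hy α)]
    refine sum_congr rfl fun β _ => ?_
    rw [probeItems, prod_insert hyE, prod_insert h0E, hcy]
    ring
  · refine mul_ne_zero ?_ (prod_ne_zero_iff.2 fun i hi => ?_)
    · rw [hc0]
      exact sub_ne_zero.2 ((hR1'.apply_le_allOne _ α).trans_lt hlt).ne
    · obtain ⟨j, hj, rfl⟩ := mem_image.1 hi
      rw [hcF hi]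
      exact sub_ne_zero.2 (hR2'.apply_lt_allOne (hQe.q_eq _) (mem_filter.1 hj).2).ne
  · obtain ⟨j, hβ, hα⟩ : ∃ j, β j = true ∧ α j = false := by
      simp only [Pi.le_def, not_forall] at hβα
      obtain ⟨j, hj⟩ := hβα
      exact ⟨j, by revert hj; cases β j <;> cases α j <;> decide⟩
    by_cases hjB : j ∈ B
    · have hi : e (freeCopy θ θ' e m j, j) ∈ freeItems θ θ' e m (B.filter (α · = false)) :=
        mem_image_of_mem _ (mem_filter.2 ⟨hjB, hα⟩)
      refine mul_eq_zero_of_right _ (mul_eq_zero_of_right _ (prod_eq_zero hi ?_))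
      rw [hcF hi, hR1'.apply_eq_allOne (hQe.q_eq _) hβ, sub_self]
    · rw [weight_dropItems_eq_zero_of_notMem hR1' hQe hy hβ hjB, zero_mul, zero_mul]

theorem false_of_allOne_lt (h : IsRestricted Q θ p) (h' : IsRestricted Q θ' p')
    (hT : ∀ r, Tp θ p r = Tp θ' p' r) (hQe : IsDoubleIdentity Q e)
    (hlt : ∀ b, θ' (e (b, m)) (allOne K) < θ (e (b, m)) (allOne K))
    (hy : ∀ x, e x ≠ y) (hyC2 : θ y (basis m) ≠ θ y (allZero K)) : False := by
  have he := hQe.injective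
  have hfinal := sum_weight_mul_prod_eq hT (disjoint_singleton_right.2 (notMem_dropItems
    (θ := θ) (θ' := θ') (m := m) hy)) (dropThreshold θ θ' e m y)
  simp only [prod_singleton, dropThreshold_self] at hfinal
  rw [sum_eq_zero fun β _ => weight_dropItems_mul_sub_eq_zero h.r1 h'.r1 h'.r2 hT hQe hy
    (hlt false) β, Fintype.sum_eq_single (basis m) fun β hβ => by
      by_cases h0 : β = allZero K
      · rw [h0, sub_self, mul_zero]
      · rw [weight_dropItems_eq_zero_of_ne h.r1 hQe hy h0 hβ, zero_mul]] at hfinal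
  have hnotin : e (true, m) ∉
      maxItems θ θ' e m ∪ freeItems θ θ' e m (univ.erase m \ blockers θ θ' e m) := by
    simp [maxItems, freeItems, mem_image_pair_iff he]
  have hW : weight θ p (dropItems θ θ' e m) (dropThreshold θ θ' e m y) (basis m) ≠ 0 := by
    rw [dropItems, weight_insert hnotin]
    refine mul_ne_zero ?_ (weight_basis_ne_zero h hQe (fun j hj => ?_)
      (fun i hi => dropThreshold_of_mem_maxItems hy hi)
      (fun i hi => dropThreshold_of_mem_freeItems he hy sdiff_subset hi))
    · rw [dropThreshold_true he hy, h.r1.apply_eq_allOne (hQe.q_eq _) (basis_apply_self m)]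
      exact sub_ne_zero.2 (hlt true).ne'
    · obtain ⟨h1, h2⟩ := mem_sdiff.1 hj
      exact ⟨ne_of_mem_erase h1, fun hb => h2 (by classical exact mem_filter.2 ⟨h1, hb⟩)⟩
  exact mul_ne_zero hW (sub_ne_zero.2 hyC2) hfinal

end Contradiction

end DroppedMaxima

section Identification

variable {Q : Fin J → Fin K → Bool} {θ θ' : Fin J → (Fin K → Bool) → ℝ}
  {p p' : (Fin K → Bool) → ℝ} {e : Bool × Fin K → Fin J}

theorem allOne_eq_allOne (h : IsRestricted Q θ p) (h' : IsRestricted Q θ' p')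
    (hT : ∀ r, Tp θ p r = Tp θ' p' r) (hQe : IsDoubleIdentity Q e)
    (hC2 : ∀ m, ∃ y, (∀ x, e x ≠ y) ∧ θ y (basis m) ≠ θ y (allZero K)) (m : Fin K) (b : Bool) :
    θ (e (b, m)) (allOne K) = θ' (e (b, m)) (allOne K) := by
  obtain ⟨y, hy, hyC2⟩ := hC2 m
  refine allOne_eq_of_forall_not_blocks h h' hT hQe (fun j hjm hbl => ?_) hy hyC2 b
  have hlt : ∀ b, θ' (e (b, j)) (allOne K) < θ (e (b, j)) (allOne K) := fun b =>
    hbl b ▸ h.r2.apply_lt_allOne (hQe.q_eq _) (basis_apply_of_ne hjm)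
  obtain ⟨z, hz, hzC2⟩ := hC2 j
  exact false_of_allOne_lt h h' hT hQe hlt hz hzC2

theorem apply_basis_ne_allOne (h : IsRestricted Q θ p) (h' : IsRestricted Q θ' p')
    (hT : ∀ r, Tp θ p r = Tp θ' p' r) (hQe : IsDoubleIdentity Q e)
    (hC2 : ∀ m, ∃ y, (∀ x, e x ≠ y) ∧ θ y (basis m) ≠ θ y (allZero K)) {k l : Fin K}
    (hkl : k ≠ l) (b : Bool) :
    θ (e (b, k)) (basis l) ≠ θ' (e (b, k)) (allOne K) ∧
      θ (e (b, k)) (allOne K) ≠ θ' (e (b, k)) (basis l) := by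
  have heq := allOne_eq_allOne h h' hT hQe hC2 k b
  have hlt := h.r2.apply_lt_allOne (hQe.q_eq (b, k)) (basis_apply_of_ne hkl)
  have hlt' := h'.r2.apply_lt_allOne (hQe.q_eq (b, k)) (basis_apply_of_ne hkl)
  exact ⟨fun hc => by linarith, fun hc => by linarith⟩

end Identification

def pairItem (hJ : 2 * K ≤ J) (x : Bool × Fin K) : Fin J :=
  ⟨cond x.1 (K + x.2) x.2, by cases x.1 <;> simp <;> omega⟩

lemma pairItem_ne {hJ : 2 * K ≤ J} {y : Fin J} (hy : 2 * K ≤ (y : ℕ)) (x : Bool × Fin K) :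
    pairItem hJ x ≠ y := fun h => by
  have := congrArg Fin.val h
  rcases x with ⟨_ | _, k⟩ <;> simp [pairItem] at this <;> omega

lemma isDoubleIdentity_pairItem {Q : Fin J → Fin K → Bool} (hJ : 2 * K ≤ J) (hC1 : C1 Q) :
    IsDoubleIdentity Q (pairItem hJ) where
  injective := by
    rintro ⟨_ | _, j⟩ ⟨_ | _, k⟩ h <;> have := congrArg Fin.val h <;>
      simp [pairItem] at this <;> first | omega | simp [Fin.ext_iff, this]
  q_eq := by
    rintro ⟨_ | _, k⟩
    · exact (hC1 k (by omega) (by omega)).1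
    · exact (hC1 k (by omega) (by omega)).2

end LatentClass

theorem lemma2_inequalities_general
    {J K : ℕ} (hJ : 2 * K ≤ J) (Q : Fin J → Fin K → Bool)
    (θ θb : Fin J → (Fin K → Bool) → ℝ) (p pb : (Fin K → Bool) → ℝ)
    (hp : PValid p) (hpb : PValid pb)
    (hR1 : R1 Q θ) (hR1b : R1 Q θb) (hR2 : R2 Q θ) (hR2b : R2 Q θb)
    (hC1 : C1 Q) (hC2 : C2 θ)
    (hT : ∀ r : Fin J → Bool, Tp θ p r = Tp θb pb r) :
    ∀ (k h : Fin K), k ≠ h →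
      ∀ (h1 : (k : ℕ) < J) (h2 : K + (k : ℕ) < J),
      θ ⟨(k : ℕ), h1⟩ (basis h) ≠ θb ⟨(k : ℕ), h1⟩ (allOne K) ∧
      θ ⟨(k : ℕ), h1⟩ (allOne K) ≠ θb ⟨(k : ℕ), h1⟩ (basis h) ∧
      θ ⟨K + (k : ℕ), h2⟩ (basis h) ≠ θb ⟨K + (k : ℕ), h2⟩ (allOne K) ∧
      θ ⟨K + (k : ℕ), h2⟩ (allOne K) ≠ θb ⟨K + (k : ℕ), h2⟩ (basis h) := by
  intro k h hkh _ _
  have hC2' : ∀ m, ∃ y, (∀ x, LatentClass.pairItem hJ x ≠ y) ∧ θ y (basis m) ≠ θ y (allZero K) :=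
    fun m => let ⟨y, hy, hne⟩ := hC2 m
    ⟨y, LatentClass.pairItem_ne hy, hne⟩
  have key := LatentClass.apply_basis_ne_allOne ⟨hp, hR1, hR2⟩ ⟨hpb, hR1b, hR2b⟩ hT
    (LatentClass.isDoubleIdentity_pairItem hJ hC1) hC2' hkh
  exact ⟨(key false).1, (key false).2, (key true).1, (key true).2⟩

/-- **Lemma 2.** Under the standing hypotheses, for all `k ≠ h`, the four stated
inequalities hold for items `k` and `K + k`. -/
theorem lemma2_inequalities
    {J K : ℕ} (hJ : 2 * K ≤ J) (Q : Fin J → Fin K → Bool)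
    (θ θb : Fin J → (Fin K → Bool) → ℝ) (p pb : (Fin K → Bool) → ℝ)
    (hθ : ThetaValid θ) (hθb : ThetaValid θb) (hp : PValid p) (hpb : PValid pb)
    (hR1 : R1 Q θ) (hR1b : R1 Q θb) (hR2 : R2 Q θ) (hR2b : R2 Q θb)
    (hC1 : C1 Q) (hC2 : C2 θ)
    (hT : ∀ r : Fin J → Bool, Tp θ p r = Tp θb pb r) :
    ∀ (k h : Fin K), k ≠ h →
      ∀ (h1 : (k : ℕ) < J) (h2 : K + (k : ℕ) < J),
      θ ⟨(k : ℕ), h1⟩ (basis h) ≠ θb ⟨(k : ℕ), h1⟩ (allOne K) ∧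
      θ ⟨(k : ℕ), h1⟩ (allOne K) ≠ θb ⟨(k : ℕ), h1⟩ (basis h) ∧
      θ ⟨K + (k : ℕ), h2⟩ (basis h) ≠ θb ⟨K + (k : ℕ), h2⟩ (allOne K) ∧
      θ ⟨K + (k : ℕ), h2⟩ (allOne K) ≠ θb ⟨K + (k : ℕ), h2⟩ (basis h) :=
  lemma2_inequalities_general hJ Q θ θb p pb hp hpb hR1 hR1b hR2 hR2b hC1 hC2 hT
end

section
/- (Step 1 of the proof of Theorem 1.) Under the standing hypotheses, θ_{j,0} = θ̄_{j,0} for every item j with j > 2K, where 0 is the all-zeros attribute profile. -/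
open Finset

/-!
Subtracting constants `c_j` from the item parameters preserves the equality of the T-matrix
products, so `Σ_α ∏_{j ∈ S} (θ_{j,α} - c_j) t_{r,α}(Θ) p_α` is the same for `(Θ, p)` and
`(Θ̄, p̄)` whenever `r` vanishes on `S`. Take `S` to be the first `2K` items. For each attribute
`k` one can pick constants for the twin items `k` and `K + k`, namely one value `θ_{·,1}` and one
value `θ̄_{·,1}`, so that one of the two factors vanishes at every profile with `α_k = 1`, for `Θ`
and for `Θ̄` alike, while neither vanishes at `α = 0` for `Θ`: a sign argument shows that
`θ_{i,0} = θ̄_{i,1}` cannot hold for both twins.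
Then only the profile `0` survives in both sums, and comparing `r = 0` with `r = e_j` for an item
`j > 2K` gives `θ_{j,0} = θ̄_{j,0}`.
-/

section Restrictions

variable {J K : ℕ} {Q : Fin J → Fin K → Bool} {θ : Fin J → (Fin K → Bool) → ℝ}

theorem R1.allZero_le (h : R1 Q θ) (j : Fin J) (α : Fin K → Bool) :
    θ j (allZero K) ≤ θ j α :=
  (h j).2.2 α

theorem R1.le_allOne (h : R1 Q θ) (j : Fin J) (α : Fin K → Bool) :
    θ j α ≤ θ j (allOne K) :=
  (h j).2.1 (allOne K) α fun _ _ => rfl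

theorem R1.eq_allOne_of_basis (h : R1 Q θ) {j : Fin J} {k : Fin K} (hj : Q j = basis k)
    {α : Fin K → Bool} (hα : α k = true) : θ j α = θ j (allOne K) := by
  refine (h j).1 α (allOne K) ?_ fun _ _ => rfl
  intro i hi
  rw [hj, basis, decide_eq_true_eq] at hi
  exact hi ▸ hα

theorem R2.allZero_lt_allOne (h : R2 Q θ) {j : Fin J} {k : Fin K} (hj : Q j = basis k) :
    θ j (allZero K) < θ j (allOne K) :=
  h k j hj (allZero K) rfl

end Restrictions

theorem exists_eq_true_of_ne_allZero {K : ℕ} {α : Fin K → Bool} (hα : α ≠ allZero K) :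
    ∃ k, α k = true := by
  by_contra! h
  exact hα (funext fun k => by simpa [allZero] using h k)

section ShiftedMoment

variable {J K : ℕ} {σ : Type*} (θ θb : Fin J → (Fin K → Bool) → ℝ)
  (p pb : (Fin K → Bool) → ℝ)

theorem tEntry_allFalse (α : Fin K → Bool) : tEntry θ (fun _ => false) α = 1 := by
  simp [tEntry]

theorem tEntry_update_true {r : Fin J → Bool} {a : Fin J} (ha : r a = false)
    (α : Fin K → Bool) : tEntry θ (Function.update r a true) α = θ a α * tEntry θ r α := by
  unfold tEntry
  rw [← Finset.mul_prod_erase _ _ (Finset.mem_univ a),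
    ← Finset.mul_prod_erase _ (fun j => if r j then θ j α else 1) (Finset.mem_univ a),
    Function.update_self, ha, if_pos rfl, if_neg Bool.false_ne_true, one_mul]
  refine congrArg _ (Finset.prod_congr rfl fun j hj => ?_)
  rw [Function.update_of_ne (Finset.ne_of_mem_erase hj)]

/-- Row `r + Σ_{s ∈ S} e_{ι s}` of the paper's `T(Q, Θ - c) p`, when `r` vanishes on `ι '' S`
and `ι` is injective. -/
def shiftedMoment (ι : σ → Fin J) (c : σ → ℝ) (S : Finset σ) (r : Fin J → Bool) : ℝ :=
  ∑ α : Fin K → Bool, (∏ s ∈ S, (θ (ι s) α - c s)) * tEntry θ r α * p α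

variable {θ θb p pb}

theorem shiftedMoment_empty (ι : σ → Fin J) (c : σ → ℝ) (r : Fin J → Bool) :
    shiftedMoment θ p ι c ∅ r = Tp θ p r := by
  simp [shiftedMoment, Tp]

theorem shiftedMoment_insert [DecidableEq σ] {ι : σ → Fin J} (c : σ → ℝ) {S : Finset σ}
    {a : σ} (ha : a ∉ S) {r : Fin J → Bool} (hra : r (ι a) = false) :
    shiftedMoment θ p ι c (insert a S) r =
      shiftedMoment θ p ι c S (Function.update r (ι a) true) -
        c a * shiftedMoment θ p ι c S r := by
  simp only [shiftedMoment, Finset.mul_sum, ← Finset.sum_sub_distrib]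
  refine Finset.sum_congr rfl fun α _ => ?_
  rw [Finset.prod_insert ha, tEntry_update_true θ hra]
  ring

theorem shiftedMoment_eq_of_Tp_eq {ι : σ → Fin J} (hι : Function.Injective ι) (c : σ → ℝ)
    (hT : ∀ r, Tp θ p r = Tp θb pb r) (S : Finset σ) {r : Fin J → Bool}
    (hr : ∀ s ∈ S, r (ι s) = false) :
    shiftedMoment θ p ι c S r = shiftedMoment θb pb ι c S r := by
  classical
  induction S using Finset.induction_on generalizing r with
  | empty => rw [shiftedMoment_empty, shiftedMoment_empty, hT]
  | insert a S ha ih =>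
    have hra := hr a (Finset.mem_insert_self a S)
    have hrS : ∀ s ∈ S, r (ι s) = false := fun s hs => hr s (Finset.mem_insert_of_mem hs)
    have hrS' : ∀ s ∈ S, Function.update r (ι a) true (ι s) = false := fun s hs => by
      rw [Function.update_of_ne (hι.ne (ne_of_mem_of_not_mem hs ha)), hrS s hs]
    rw [shiftedMoment_insert c ha hra, shiftedMoment_insert c ha hra, ih hrS', ih hrS]

theorem shiftedMoment_eq_of_vanishing {ι : σ → Fin J} {c : σ → ℝ} {S : Finset σ}
    (hvan : ∀ α ≠ allZero K, ∃ s ∈ S, θ (ι s) α = c s) (r : Fin J → Bool) :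
    shiftedMoment θ p ι c S r =
      (∏ s ∈ S, (θ (ι s) (allZero K) - c s)) * tEntry θ r (allZero K) * p (allZero K) := by
  refine Finset.sum_eq_single _ (fun α _ hα => ?_) (absurd (Finset.mem_univ _))
  obtain ⟨s, hs, hθs⟩ := hvan α hα
  rw [Finset.prod_eq_zero hs (sub_eq_zero.mpr hθs), zero_mul, zero_mul]

theorem theta_allZero_eq_of_vanishing [Fintype σ] {ι : σ → Fin J} (hι : Function.Injective ι)
    {c : σ → ℝ} (hT : ∀ r, Tp θ p r = Tp θb pb r) (hp : p (allZero K) ≠ 0)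
    (hne : ∀ s, θ (ι s) (allZero K) ≠ c s)
    (hvan : ∀ α ≠ allZero K, (∃ s, θ (ι s) α = c s) ∧ ∃ s, θb (ι s) α = c s)
    {j : Fin J} (hj : ∀ s, ι s ≠ j) : θ j (allZero K) = θb j (allZero K) := by
  have hvanθ := shiftedMoment_eq_of_vanishing (p := p) (S := Finset.univ)
    fun α hα => by simpa using (hvan α hα).1
  have hvanθb := shiftedMoment_eq_of_vanishing (p := pb) (S := Finset.univ)
    fun α hα => by simpa using (hvan α hα).2
  have hr₀ := shiftedMoment_eq_of_Tp_eq hι c hT Finset.univ (r := fun _ => false)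
    fun _ _ => rfl
  have hr₁ := shiftedMoment_eq_of_Tp_eq hι c hT Finset.univ
    (r := Function.update (fun _ => false) j true)
    fun s _ => by rw [Function.update_of_ne (hj s)]
  rw [hvanθ, hvanθb, tEntry_allFalse, tEntry_allFalse] at hr₀
  rw [hvanθ, hvanθb, tEntry_update_true _ rfl, tEntry_update_true _ rfl, tEntry_allFalse,
    tEntry_allFalse] at hr₁
  have hG : (∏ s, (θ (ι s) (allZero K) - c s)) * p (allZero K) ≠ 0 :=
    mul_ne_zero (Finset.prod_ne_zero_iff.mpr fun s _ => sub_ne_zero.mpr (hne s)) hp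
  refine mul_left_cancel₀ hG ?_
  linear_combination hr₁ - θb j (allZero K) * hr₀

end ShiftedMoment

section Twins

variable {J K : ℕ} {Q : Fin J → Fin K → Bool} {θ θb : Fin J → (Fin K → Bool) → ℝ}
  {p pb : (Fin K → Bool) → ℝ}

/-- If both held, the moment with factors `(θ_i - θ_{i,0}) (θ_{i'} - θ_{i',1})` would be `≤ 0`
for `(Θ, p)` but `> 0` for `(Θ̄, p̄)`. -/
theorem not_allZero_eq_bar_allOne_of_twins (hR1 : R1 Q θ) (hR1b : R1 Q θb) (hR2 : R2 Q θ)
    (hR2b : R2 Q θb) (hp : ∀ α, 0 ≤ p α) (hpb : ∀ α, 0 < pb α)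
    (hT : ∀ r, Tp θ p r = Tp θb pb r) {k : Fin K} {i i' : Fin J} (hi : Q i = basis k)
    (hi' : Q i' = basis k) (hne : i ≠ i') :
    ¬(θ i (allZero K) = θb i (allOne K) ∧ θ i' (allZero K) = θb i' (allOne K)) := by
  rintro ⟨h, h'⟩
  have hι : Function.Injective ![i, i'] := by
    simp [Function.Injective, Fin.forall_fin_two, hne, hne.symm]
  have key := shiftedMoment_eq_of_Tp_eq hι ![θ i (allZero K), θ i' (allOne K)] hT Finset.univ
    (r := fun _ => false) fun _ _ => rfl
  simp only [shiftedMoment, Fin.prod_univ_two, tEntry_allFalse, mul_one, Matrix.cons_val_zero,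
    Matrix.cons_val_one] at key
  have hle : ∑ α, (θ i α - θ i (allZero K)) * (θ i' α - θ i' (allOne K)) * p α ≤ 0 :=
    Finset.sum_nonpos fun α _ => mul_nonpos_of_nonpos_of_nonneg
      (mul_nonpos_of_nonneg_of_nonpos (sub_nonneg.mpr (hR1.allZero_le i α))
        (sub_nonpos.mpr (hR1.le_allOne i' α))) (hp α)
  have hneg : ∀ α, θb i' α - θ i' (allOne K) < 0 := fun α => by
    linarith [hR1b.le_allOne i' α, hR2.allZero_lt_allOne hi']
  have hpos :
      0 < ∑ α, (θb i α - θ i (allZero K)) * (θb i' α - θ i' (allOne K)) * pb α := by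
    refine Finset.sum_pos' (fun α _ => mul_nonneg (mul_nonneg_of_nonpos_of_nonpos ?_
      (hneg α).le) (hpb α).le) ⟨allZero K, Finset.mem_univ _, mul_pos
        (mul_pos_of_neg_of_neg ?_ (hneg _)) (hpb _)⟩
    · linarith [hR1b.le_allOne i α]
    · linarith [hR2b.allZero_lt_allOne hi]
  linarith

theorem exists_consts_annihilating_twins (hR1 : R1 Q θ) (hR1b : R1 Q θb) (hR2 : R2 Q θ)
    (hR2b : R2 Q θb) (hp : ∀ α, 0 ≤ p α) (hpb : ∀ α, 0 < pb α)
    (hT : ∀ r, Tp θ p r = Tp θb pb r) {k : Fin K} {i i' : Fin J} (hi : Q i = basis k)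
    (hi' : Q i' = basis k) (hne : i ≠ i') :
    ∃ a b : ℝ, θ i (allZero K) ≠ a ∧ θ i' (allZero K) ≠ b ∧
      ∀ α, α k = true → (θ i α = a ∨ θ i' α = b) ∧ (θb i α = a ∨ θb i' α = b) := by
  by_cases h : θ i (allZero K) = θb i (allOne K)
  · refine ⟨θ i (allOne K), θb i' (allOne K), (hR2.allZero_lt_allOne hi).ne,
      fun h' => not_allZero_eq_bar_allOne_of_twins hR1 hR1b hR2 hR2b hp hpb hT hi hi' hne ⟨h, h'⟩,
      fun α hα => ⟨.inl (hR1.eq_allOne_of_basis hi hα),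
        .inr (hR1b.eq_allOne_of_basis hi' hα)⟩⟩
  · exact ⟨θb i (allOne K), θ i' (allOne K), h, (hR2.allZero_lt_allOne hi').ne,
      fun α hα => ⟨.inr (hR1.eq_allOne_of_basis hi' hα),
        .inl (hR1b.eq_allOne_of_basis hi hα)⟩⟩

end Twins

theorem step1_theta_zero_eq_general
    {J K : ℕ} (Q : Fin J → Fin K → Bool)
    (θ θb : Fin J → (Fin K → Bool) → ℝ) (p pb : (Fin K → Bool) → ℝ)
    (hp : PValid p) (hpb : PValid pb)
    (hR1 : R1 Q θ) (hR1b : R1 Q θb) (hR2 : R2 Q θ) (hR2b : R2 Q θb)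
    (hC1 : C1 Q)
    (hT : ∀ r : Fin J → Bool, Tp θ p r = Tp θb pb r) :
    ∀ j : Fin J, 2 * K ≤ (j : ℕ) → θ j (allZero K) = θb j (allZero K) := by
  intro j hj
  let first : Fin K → Fin J := fun k => ⟨k, by omega⟩
  let second : Fin K → Fin J := fun k => ⟨K + k, by omega⟩
  have hQ k : Q (first k) = basis k ∧ Q (second k) = basis k := hC1 k _ _
  choose a b ha hb hab using fun k => exists_consts_annihilating_twins hR1 hR1b hR2 hR2b
    (fun α => (hp.1 α).1.le) (fun α => (hpb.1 α).1) hT (hQ k).1 (hQ k).2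
    (Fin.ne_of_val_ne (by simp [first, second, k.pos.ne']))
  have hι : Function.Injective (Sum.elim first second) :=
    Function.Injective.sumElim (fun k k' h => by simpa [first, Fin.ext_iff] using h)
      (fun k k' h => by simpa [second, Fin.ext_iff] using h)
      (fun k k' h => by simp [first, second, Fin.ext_iff] at h; omega)
  refine theta_allZero_eq_of_vanishing hι (c := Sum.elim a b) hT (hp.1 _).1.ne'
    (Sum.rec ha hb) (fun α hα => ?_) (Sum.rec (fun k h => ?_) (fun k h => ?_))
  · obtain ⟨k, hk⟩ := exists_eq_true_of_ne_allZero hα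
    obtain ⟨hθ, hθb⟩ := hab k α hk
    exact ⟨hθ.elim (⟨.inl k, ·⟩) (⟨.inr k, ·⟩), hθb.elim (⟨.inl k, ·⟩) (⟨.inr k, ·⟩)⟩
  all_goals simp [first, second, Fin.ext_iff] at h; omega

/-- **Step 1.** Under the standing hypotheses, `θ_{j,0} = θ̄_{j,0}` for every item
`j > 2K`. -/
theorem step1_theta_zero_eq
    {J K : ℕ} (hJ : 2 * K ≤ J) (Q : Fin J → Fin K → Bool)
    (θ θb : Fin J → (Fin K → Bool) → ℝ) (p pb : (Fin K → Bool) → ℝ)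
    (hθ : ThetaValid θ) (hθb : ThetaValid θb) (hp : PValid p) (hpb : PValid pb)
    (hR1 : R1 Q θ) (hR1b : R1 Q θb) (hR2 : R2 Q θ) (hR2b : R2 Q θb)
    (hC1 : C1 Q) (hC2 : C2 θ)
    (hT : ∀ r : Fin J → Bool, Tp θ p r = Tp θb pb r) :
    ∀ j : Fin J, 2 * K ≤ (j : ℕ) → θ j (allZero K) = θb j (allZero K) :=
  step1_theta_zero_eq_general Q θ θb p pb hp hpb hR1 hR1b hR2 hR2b hC1 hT
end

section
/- (Invertibility of the T-matrix for an identity Q-matrix.) Let K ≥ 1 and let Θ = (θ_{k,α}) be a K × 2^K real matrix (rows indexed by k ∈ {1,…,K}, columns by α ∈ {0,1}^K) such that for every k: θ_{k,α} = θ_{k,α'} whenever α_k = α'_k = 1, and θ_{k,α} ≠ θ_{k,1} whenever α_k = 0 (1 denotes the all-ones profile). Then the 2^K × 2^K matrix whose (r, α) entry is ∏_{k : r_k = 1} θ_{k,α} (rows indexed by r ∈ {0,1}^K, empty product = 1) is invertible. -/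
open Finset

/-!
With `c_k = θ_{k,1}`, multiply `T` on the left by the Kronecker product `L` of the unitriangular
factors `[[1, 0], [-c_k, 1]]` (indices ordered `false < true`). This replaces every `θ_{k,α}` by
`θ_{k,α} - c_k`, and by the first hypothesis the entry `∏_{k ∈ r} (θ_{k,α} - c_k)` of `L T`
vanishes unless `r` and `α` are disjoint. After complementing the columns, `L T` is therefore
triangular for the product order on `{0,1}^K`, with diagonal entries `∏_{k ∈ r} (θ_{k,rᶜ} - c_k)`,
which are nonzero by the second hypothesis. As `det L = 1`, `det T ≠ 0`.
-/

namespace Matrix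

variable {m R : Type*} [Fintype m] [DecidableEq m] [PartialOrder m] [CommRing R]

theorem det_of_apply_eq_zero_of_not_le (M : Matrix m m R) (h : ∀ i j, ¬ i ≤ j → M i j = 0) :
    M.det = ∏ i, M i i := by
  let _ : Fintype (LinearExtension m) := ‹Fintype m›
  let e : LinearExtension m ≃ m := Equiv.refl m
  have hM : (M.submatrix e e).IsUpperTriangular := fun i j hji =>
    h _ _ fun hle => (toLinearExtension.monotone hle).not_gt hji
  rw [← det_submatrix_equiv_self e M, det_of_isUpperTriangular hM]
  rfl

theorem det_of_apply_eq_zero_of_not_ge (M : Matrix m m R) (h : ∀ i j, ¬ j ≤ i → M i j = 0) :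
    M.det = ∏ i, M i i := by
  rw [← det_transpose, det_of_apply_eq_zero_of_not_le Mᵀ fun i j hij => h j i hij]
  rfl

end Matrix

open Matrix

def shiftMatrix {ι R : Type*} [Fintype ι] [CommRing R] (c : ι → R) :
    Matrix (ι → Bool) (ι → Bool) R :=
  of fun r s => ∏ i, if r i then (if s i then 1 else -c i) else (if s i then 0 else 1)

theorem det_shiftMatrix {ι R : Type*} [Fintype ι] [DecidableEq ι] [CommRing R] (c : ι → R) :
    (shiftMatrix c).det = 1 := by
  rw [det_of_apply_eq_zero_of_not_ge]
  · refine prod_eq_one fun r _ => prod_eq_one fun i _ => ?_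
    cases r i <;> rfl
  · intro r s hsr
    obtain ⟨i, hri, hsi⟩ : ∃ i, r i = false ∧ s i = true := by
      simpa [Pi.le_def, Bool.lt_iff] using hsr
    exact prod_eq_zero (mem_univ i) (by simp [hri, hsi])

theorem shiftMatrix_mul_tEntry {J K : ℕ} (c : Fin J → ℝ) (θ : Fin J → (Fin K → Bool) → ℝ) :
    shiftMatrix c * of (tEntry θ) = of (tEntry fun j α => θ j α - c j) := by
  ext r α
  simp only [shiftMatrix, tEntry, mul_apply, of_apply, ← prod_mul_distrib]
  rw [← Fintype.prod_sum fun j (b : Bool) =>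
    (if r j then (if b then 1 else -c j) else (if b then 0 else 1)) * if b then θ j α else 1]
  refine prod_congr rfl fun j _ => ?_
  cases r j <;> simp [sub_eq_add_neg]

theorem det_tEntry_sub_ne_zero {K : ℕ} {c : Fin K → ℝ} {θ : Fin K → (Fin K → Bool) → ℝ}
    (hc : ∀ k α, α k = true → θ k α = c k) (hne : ∀ k α, α k = false → θ k α ≠ c k) :
    (of (tEntry fun k α => θ k α - c k)).det ≠ 0 := by
  let σ : Equiv.Perm (Fin K → Bool) := Function.Involutive.toPerm compl compl_involutive
  suffices ((of (tEntry fun k α => θ k α - c k)).submatrix id σ).det ≠ 0 by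
    rw [det_permute'] at this
    exact right_ne_zero_of_mul this
  rw [det_of_apply_eq_zero_of_not_le]
  · refine prod_ne_zero_iff.mpr fun r _ => ?_
    simp only [submatrix_apply, of_apply, tEntry, id]
    refine prod_ne_zero_iff.mpr fun k _ => ?_
    cases hr : r k
    · simp
    · simpa [sub_eq_zero, σ] using hne k rᶜ (by simp [hr])
  · intro r s hrs
    obtain ⟨k, hsk, hrk⟩ : ∃ k, s k = false ∧ r k = true := by
      simpa [Pi.le_def, Bool.lt_iff] using hrs
    exact prod_eq_zero (mem_univ k) (by simp [hrk, σ, hc k sᶜ (by simp [hsk])])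

theorem isUnit_tEntry {K : ℕ} {c : Fin K → ℝ} {θ : Fin K → (Fin K → Bool) → ℝ}
    (hc : ∀ k α, α k = true → θ k α = c k) (hne : ∀ k α, α k = false → θ k α ≠ c k) :
    IsUnit (of (tEntry θ)) := by
  have hdet := congrArg det (shiftMatrix_mul_tEntry c θ)
  rw [det_mul, det_shiftMatrix, one_mul] at hdet
  rw [isUnit_iff_isUnit_det, isUnit_iff_ne_zero, hdet]
  exact det_tEntry_sub_ne_zero hc hne

theorem identity_Q_T_matrix_invertible_general {K : ℕ} (θ : Fin K → (Fin K → Bool) → ℝ)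
    (hsame : ∀ (k : Fin K) (α α' : Fin K → Bool),
      α k = true → α' k = true → θ k α = θ k α')
    (hne : ∀ (k : Fin K) (α : Fin K → Bool), α k = false → θ k α ≠ θ k (allOne K)) :
    IsUnit (Matrix.of fun (r α : Fin K → Bool) => ∏ k, if r k then θ k α else 1) :=
  isUnit_tEntry (fun k α hk => hsame k α (allOne K) hk rfl) hne

/-- Invertibility of the T-matrix for an identity Q-matrix: if `θ_{k,α}` depends on `α`
only through `α_k` when `α_k = 1`, and `θ_{k,α} ≠ θ_{k,1}` whenever `α_k = 0`, then the
`2^K × 2^K` matrix with `(r, α)` entry `∏_{k : r_k = 1} θ_{k,α}` is invertible. -/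
theorem identity_Q_T_matrix_invertible {K : ℕ} (hK : 1 ≤ K)
    (θ : Fin K → (Fin K → Bool) → ℝ)
    (hsame : ∀ (k : Fin K) (α α' : Fin K → Bool),
      α k = true → α' k = true → θ k α = θ k α')
    (hne : ∀ (k : Fin K) (α : Fin K → Bool), α k = false → θ k α ≠ θ k (allOne K)) :
    IsUnit (Matrix.of fun (r α : Fin K → Bool) => ∏ k, if r k then θ k α else 1) :=
  identity_Q_T_matrix_invertible_general θ hsame hne
end
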